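/- arXiv:2602.15905 — 6 statements merged into one kernel-verified Lean document; each statement's English description precedes it below -/
import Mathlib

section
/- If the Lagarias inequality σ(n) ≤ H_n + exp(H_n)·log(H_n) fails for some positive integer n, then the smallest positive integer m for which it fails is a superabundant number. -/
open Real Finset

/-- The n-th harmonic number `H_n = ∑_{j=1}^n 1/j` as a real number. -/
noncomputable def harmonicNum (n : ℕ) : ℝ := ∑ j ∈ Finset.range n, (1 : ℝ) / (j + 1)

/-- The sum-of-divisors function `σ(n) = ∑_{d ∣ n} d`. -/
def sigmaSum (n : ℕ) : ℕ := ∑ d ∈ Nat.divisors n, d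

/-- A positive integer `n` is superabundant if `σ(m)/m < σ(n)/n` for every
positive integer `m < n`. -/
def Superabundant (n : ℕ) : Prop :=
  0 < n ∧ ∀ m : ℕ, 0 < m → m < n →
    (sigmaSum m : ℝ) / m < (sigmaSum n : ℝ) / n

/-- The Lagarias inequality at `n`: `σ(n) ≤ H_n + exp(H_n)·log(H_n)`. -/
def LagariasIneq (n : ℕ) : Prop :=
  (sigmaSum n : ℝ) ≤ harmonicNum n + Real.exp (harmonicNum n) * Real.log (harmonicNum n)

/-! ### Auxiliary lemmas -/

lemma harmonicNum_succ' (n : ℕ) :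
    harmonicNum (n+1) = harmonicNum n + 1 / ((n:ℝ)+1) := by
  simp [harmonicNum, Finset.sum_range_succ]

lemma one_le_harmonicNum (n : ℕ) (hn : 1 ≤ n) : 1 ≤ harmonicNum n := by
  induction n with
  | zero => omega
  | succ k ih =>
    rcases Nat.eq_zero_or_pos k with h | h
    · subst h; simp [harmonicNum]
    · rw [harmonicNum_succ']
      have h2 : (0:ℝ) < 1/((k:ℝ)+1) := by positivity
      linarith [ih h]

lemma harmonicNum_eq_harmonic (n : ℕ) : harmonicNum n = (harmonic n : ℝ) := by
  unfold harmonicNum harmonic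
  push_cast
  simp [one_div]

lemma log_le_harmonicNum (n : ℕ) : Real.log ((n:ℝ)+1) ≤ harmonicNum n := by
  rw [harmonicNum_eq_harmonic]
  have := log_add_one_le_harmonic n
  push_cast at this
  exact this

lemma log_le_half (x : ℝ) (hx : 0 < x) : Real.log x ≤ x/2 - 1 + 0.6931471808 := by
  have h1 : Real.log (x/2) ≤ x/2 - 1 := Real.log_le_sub_one_of_pos (by positivity)
  have h2 : Real.log x = Real.log (x/2) + Real.log 2 := by
    rw [← Real.log_mul (by positivity) (by norm_num)]; ring_nf
  have := Real.log_two_lt_d9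
  linarith

lemma log_le_div_e (x : ℝ) (hx : 0 < x) : Real.log x ≤ x / 2.7182818283 := by
  have h1 : Real.log (x / Real.exp 1) ≤ x / Real.exp 1 - 1 :=
    Real.log_le_sub_one_of_pos (by positivity)
  have h2 : Real.log (x / Real.exp 1) = Real.log x - 1 := by
    rw [Real.log_div (ne_of_gt hx) (by positivity), Real.log_exp]
  have he : (2.7182818283:ℝ) < Real.exp 1 := Real.exp_one_gt_d9
  have : x / Real.exp 1 ≤ x / 2.7182818283 :=
    div_le_div_of_nonneg_left hx.le (by norm_num) he.le
  linarith

lemma harmonicNum_upper (n : ℕ) (hn : 10 ≤ n) :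
    harmonicNum n ≤ harmonicNum 10 + Real.log n - Real.log 10 := by
  induction n, hn using Nat.le_induction with
  | base => simp
  | succ k hk ih =>
    rw [harmonicNum_succ']
    have hk0 : (0:ℝ) < k := by positivity
    have h1 : Real.log ((k:ℝ)/((k:ℝ)+1)) ≤ (k:ℝ)/((k:ℝ)+1) - 1 :=
      Real.log_le_sub_one_of_pos (by positivity)
    have h2 : Real.log ((k:ℝ)/((k:ℝ)+1)) = Real.log k - Real.log ((k:ℝ)+1) := by
      rw [Real.log_div (ne_of_gt hk0) (by positivity)]
    have h3 : (k:ℝ)/((k:ℝ)+1) - 1 = -(1/((k:ℝ)+1)) := by field_simp; ring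
    have h4 : 1/((k:ℝ)+1) ≤ Real.log ((k:ℝ)+1) - Real.log k := by
      rw [h2, h3] at h1; linarith
    push_cast
    linarith

lemma log_ten_lb : (2.2794413:ℝ) ≤ Real.log 10 := by
  have h1 : Real.log 10 = 3 * Real.log 2 + Real.log (5/4) := by
    rw [show (10:ℝ) = 2^3 * (5/4) by norm_num,
      Real.log_mul (by norm_num) (by norm_num), Real.log_pow]
    norm_num
  have h2 : Real.log ((4:ℝ)/5) ≤ (4:ℝ)/5 - 1 := Real.log_le_sub_one_of_pos (by norm_num)
  have h3 : Real.log ((5:ℝ)/4) = - Real.log ((4:ℝ)/5) := by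
    rw [show (5:ℝ)/4 = ((4:ℝ)/5)⁻¹ by norm_num, Real.log_inv]
  have h4 := Real.log_two_gt_d9
  rw [h1, h3]
  linarith

set_option maxHeartbeats 1000000 in
lemma lemA_big (n : ℕ) (hn : 10 ≤ n) :
    harmonicNum n + Real.log (harmonicNum (n+1)) ≤
      ((n:ℝ)+1) / harmonicNum (n+1) + (n:ℝ)/((n:ℝ)+1) := by
  set H := harmonicNum n with hHdef
  set x := harmonicNum (n+1) with hxdef
  set t := Real.log n with htdef
  have hn1 : (10:ℝ) ≤ (n:ℝ) := by exact_mod_cast hn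
  have hH1 : 1 ≤ H := one_le_harmonicNum n (by omega)
  have hx_eq : x = H + 1/((n:ℝ)+1) := harmonicNum_succ' n
  have hx1 : (1:ℝ) ≤ x := by
    rw [hx_eq]; have : (0:ℝ) < 1/((n:ℝ)+1) := by positivity
    linarith
  have hH10 : harmonicNum 10 = 7381/2520 := by
    simp [harmonicNum, Finset.sum_range_succ]; norm_num
  have hHub : H ≤ t + 0.6496 := by
    have h1 := harmonicNum_upper n hn
    have h2 := log_ten_lb
    rw [hH10] at h1
    have : (7381:ℝ)/2520 - 2.2794413 ≤ 0.6496 := by norm_num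
    linarith
  have hxub : x ≤ t + 0.7406 := by
    rw [hx_eq]
    have : 1/((n:ℝ)+1) ≤ 1/11 := by
      apply div_le_div_of_nonneg_left (by norm_num) (by norm_num) (by linarith)
    linarith
  have ht : (2.2794413:ℝ) ≤ t := by
    have h1 := log_ten_lb
    have hmono : Real.log 10 ≤ Real.log n := Real.log_le_log (by norm_num) hn1
    linarith
  have hxpos : (0:ℝ) < x := by linarith
  have hlogx : Real.log x ≤ (t + 0.7406) / 2.7182818283 := by
    have h1 : Real.log x ≤ x / 2.7182818283 := log_le_div_e x hxpos
    have h2 : x / 2.7182818283 ≤ (t + 0.7406) / 2.7182818283 := by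
      apply div_le_div_of_nonneg_right hxub (by norm_num)
    linarith
  have hexp : (n:ℝ) = Real.exp t := (Real.exp_log (by linarith)).symm
  have hquart : 1 + t + t^2/2 + t^3/6 + t^4/24 ≤ Real.exp t := by
    have h := Real.sum_le_exp_of_nonneg (x := t) (by linarith) 5
    simp [Finset.sum_range_succ, Nat.factorial] at h
    nlinarith [h]
  have hpoly : (t + 0.7406) * ((t + 0.6496) + (t + 0.7406)/2.7182818283 - 10/11)
      ≤ (n:ℝ) + 1 := by
    rw [hexp]
    have hu : (0:ℝ) ≤ t - 2.2794413 := by linarith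
    have hD : (t + 0.7406)/2.7182818283 ≤ 0.36788*(t + 0.7406) := by
      rw [div_le_iff₀ (by norm_num)]
      nlinarith
    have h2 : (t + 0.7406) * ((t + 0.6496) + (t + 0.7406)/2.7182818283 - 10/11) ≤
        (t + 0.7406) * ((t + 0.6496) + 0.36788*(t + 0.7406) - 10/11) := by
      apply mul_le_mul_of_nonneg_left (by linarith) (by linarith)
    have h3 : (t + 0.7406) * ((t + 0.6496) + 0.36788*(t + 0.7406) - 10/11) ≤ Real.exp t + 1 := by
      nlinarith [hquart, mul_nonneg hu hu, mul_nonneg (mul_nonneg hu hu) hu,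
        mul_nonneg (mul_nonneg (mul_nonneg hu hu) hu) hu]
    linarith
  have hfrac : (t + 0.6496) + (t + 0.7406)/2.7182818283 - 10/11 ≤ ((n:ℝ)+1)/x := by
    have h1 : ((n:ℝ)+1)/(t + 0.7406) ≤ ((n:ℝ)+1)/x :=
      div_le_div_of_nonneg_left (by positivity) hxpos hxub
    have h2 : (t + 0.6496) + (t + 0.7406)/2.7182818283 - 10/11 ≤ ((n:ℝ)+1)/(t+0.7406) := by
      rw [le_div_iff₀ (by linarith)]
      nlinarith [hpoly]
    linarith
  have hnfr : (10:ℝ)/11 ≤ (n:ℝ)/((n:ℝ)+1) := by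
    rw [div_le_div_iff₀ (by norm_num) (by linarith)]
    linarith
  linarith [hHub, hlogx, hfrac, hnfr]

set_option maxHeartbeats 1000000 in
lemma lemA (n : ℕ) (hn : 1 ≤ n) :
    harmonicNum n + Real.log (harmonicNum (n+1)) ≤
      ((n:ℝ)+1) / harmonicNum (n+1) + (n:ℝ)/((n:ℝ)+1) := by
  rcases lt_or_ge n 10 with h | h
  · interval_cases n <;>
    · norm_num [harmonicNum, Finset.sum_range_succ]
      try linarith [log_le_half (3/2) (by norm_num), log_le_half (11/6) (by norm_num),
        log_le_half (25/12) (by norm_num), log_le_half (137/60) (by norm_num),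
        log_le_half (49/20) (by norm_num), log_le_half (363/140) (by norm_num),
        log_le_half (761/280) (by norm_num), log_le_half (7129/2520) (by norm_num),
        log_le_half (7381/2520) (by norm_num)]
  · exact lemA_big n h

/-- The Lagarias right-hand side. -/
noncomputable def lagRHS (n : ℕ) : ℝ :=
  harmonicNum n + Real.exp (harmonicNum n) * Real.log (harmonicNum n)

/-- Monotonicity step: `(n+1)·G(n) ≤ n·G(n+1)`. -/
lemma lagRHS_step (n : ℕ) (hn : 1 ≤ n) :
    ((n:ℝ)+1) * lagRHS n ≤ (n:ℝ) * lagRHS (n+1) := by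
  set c := (n:ℝ) with hcdef
  have hc : (1:ℝ) ≤ c := by rw [hcdef]; exact_mod_cast hn
  have hc1 : (0:ℝ) < c + 1 := by linarith
  set δ := 1/(c+1) with hδdef
  have hδpos : (0:ℝ) < δ := by positivity
  have hc0 : c + 1 ≠ 0 := ne_of_gt hc1
  have hδc : δ * (c+1) = 1 := by rw [hδdef]; field_simp
  set H := harmonicNum n with hHdef
  set x := harmonicNum (n+1) with hxdef
  have hH1 : (1:ℝ) ≤ H := one_le_harmonicNum n hn
  have hx_eq : x = H + δ := harmonicNum_succ' n
  have hx1 : (1:ℝ) ≤ x := by rw [hx_eq]; linarith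
  have hxpos : (0:ℝ) < x := by linarith
  have hHpos : (0:ℝ) < H := by linarith
  set E := Real.exp H with hEdef
  have hEpos : (0:ℝ) < E := Real.exp_pos H
  have hL : (0:ℝ) ≤ Real.log H := Real.log_nonneg hH1
  have hLL' : Real.log H ≤ Real.log x := Real.log_le_log hHpos (by linarith)
  have hL' : (0:ℝ) ≤ Real.log x := le_trans hL hLL'
  -- E ≥ c + 1
  have hE : c + 1 ≤ E := by
    have h1 := log_le_harmonicNum n
    have h2 := Real.exp_le_exp.mpr h1
    rwa [Real.exp_log hc1] at h2
  -- gap: δ/x ≤ log x - log H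
  have hgap : δ/x ≤ Real.log x - Real.log H := by
    have h1 : Real.log (H/x) ≤ H/x - 1 := Real.log_le_sub_one_of_pos (by positivity)
    have h2 : Real.log (H/x) = Real.log H - Real.log x :=
      Real.log_div (ne_of_gt hHpos) (ne_of_gt hxpos)
    have h3 : H/x - 1 = -(δ/x) := by
      rw [hx_eq]; field_simp; ring
    rw [h2, h3] at h1
    linarith
  -- inequality (A)
  have hA : H + Real.log x ≤ (c+1)/x + c*δ := by
    have h := lemA n hn
    have hcd : c/(c+1) = c*δ := by rw [hδdef]; ring
    rw [← hHdef, ← hxdef, ← hcdef, hcd] at h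
    exact h
  -- exp x = E * exp δ
  have hexpx : Real.exp x = E * Real.exp δ := by
    rw [hx_eq, Real.exp_add]
  have hexpδ : 1 + δ ≤ Real.exp δ := by
    have := Real.add_one_le_exp δ; linarith
  -- f3 : (c+1-δ) * (E * log x) ≤ c * (exp x * log x)
  have hELx : (0:ℝ) ≤ E * Real.log x := mul_nonneg hEpos.le hL'
  have f3 : (c+1-δ) * (E * Real.log x) ≤ c * (Real.exp x * Real.log x) := by
    have h := mul_le_mul_of_nonneg_left hexpδ
      (show (0:ℝ) ≤ c * (E * Real.log x) by positivity)
    have hδcE : δ * (E * Real.log x) + (c*δ) * (E * Real.log x) = E * Real.log x := by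
      linear_combination (E * Real.log x) * hδc
    rw [hexpx]
    nlinarith [h, hδcE]
  -- f2 : E/x ≤ (c+1) * (E * (log x - log H))
  have f2 : E * (1/x) ≤ (c+1) * (E * (Real.log x - Real.log H)) := by
    have h := mul_le_mul_of_nonneg_left hgap
      (show (0:ℝ) ≤ (c+1) * E by positivity)
    have he : (c+1) * E * (δ/x) = E * (1/x) := by
      rw [hδdef]
      field_simp
    rw [he] at h
    linarith
  -- f1 : H - c*δ ≤ E/x - δ * (E * log x)
  have f1 : H - c*δ ≤ E * (1/x) - δ * (E * Real.log x) := by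
    have hB : H - c*δ ≤ (c+1)/x - Real.log x := by linarith
    have hcδ : c*δ = 1 - δ := by linarith [hδc]
    have hBpos : (0:ℝ) ≤ H - c*δ := by rw [hcδ]; linarith
    have t2 : δ*(H - c*δ) ≤ δ*((c+1)/x - Real.log x) :=
      mul_le_mul_of_nonneg_left hB hδpos.le
    have t3 : (c+1) * (δ*(H - c*δ)) ≤ E * (δ*((c+1)/x - Real.log x)) :=
      mul_le_mul hE t2 (by positivity) hEpos.le
    have e1 : (c+1) * (δ*(H - c*δ)) = H - c*δ := by
      linear_combination (H - c*δ) * hδc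
    have e2 : E * (δ*((c+1)/x - Real.log x)) = E * (1/x) - δ * (E * Real.log x) := by
      rw [hδdef]
      field_simp
    rw [e1, e2] at t3
    exact t3
  -- combine
  show (c+1) * (H + E * Real.log H) ≤ c * (x + Real.exp x * Real.log x)
  have hxlin : x = H + δ := hx_eq
  nlinarith [f1, f2, f3, hxlin]

/-- Ratio monotonicity of the Lagarias RHS. -/
lemma lagRHS_ratio_mono (k m : ℕ) (hk : 1 ≤ k) (hkm : k ≤ m) :
    lagRHS k / k ≤ lagRHS m / m := by
  induction m, hkm using Nat.le_induction with
  | base => exact le_refl _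
  | succ j hj ih =>
    refine le_trans ih ?_
    have hj1 : 1 ≤ j := le_trans hk hj
    have hjpos : (0:ℝ) < j := by exact_mod_cast hj1
    have hj1pos : (0:ℝ) < (j:ℝ) + 1 := by linarith
    have hstep := lagRHS_step j hj1
    rw [div_le_div_iff₀ hjpos (by push_cast; linarith)]
    push_cast
    linarith [hstep]

theorem smallest_lagarias_counterexample_superabundant
    (m : ℕ) (hm : 0 < m) (hfail : ¬ LagariasIneq m)
    (hmin : ∀ k : ℕ, 0 < k → k < m → LagariasIneq k) :
    Superabundant m := by
  refine ⟨hm, fun k hk hkm => ?_⟩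
  have hkpos : (0:ℝ) < k := by exact_mod_cast hk
  have hmpos : (0:ℝ) < m := by exact_mod_cast hm
  have h1 : (sigmaSum k : ℝ) ≤ lagRHS k := hmin k hk hkm
  have h2 : lagRHS m < (sigmaSum m : ℝ) := lt_of_not_ge hfail
  have h3 : lagRHS k / k ≤ lagRHS m / m := lagRHS_ratio_mono k m hk (le_of_lt hkm)
  calc (sigmaSum k : ℝ) / k ≤ lagRHS k / k := by
        apply div_le_div_of_nonneg_right h1 hkpos.le
    _ ≤ lagRHS m / m := h3
    _ < (sigmaSum m : ℝ) / m := (div_lt_div_iff_of_pos_right hmpos).mpr h2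
end

section
/- The sequence B_n := (H_n + exp(H_n)·log(H_n))/n is strictly increasing in n for n ≥ 1; that is, B_{n+1} > B_n for every positive integer n. -/
set_option maxHeartbeats 1000000


open Real Finset

/-- The sequence `B_n = (H_n + exp(H_n)·log(H_n))/n`. -/
noncomputable def B (n : ℕ) : ℝ :=
  (harmonicNum n + Real.exp (harmonicNum n) * Real.log (harmonicNum n)) / n

lemma harm_succ (n : ℕ) : harmonicNum (n+1) = harmonicNum n + 1/(n+1) := by
  simp [harmonicNum, Finset.sum_range_succ]

lemma one_le_harm : ∀ n : ℕ, 1 ≤ n → 1 ≤ harmonicNum n := by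
  intro n hn
  induction n with
  | zero => omega
  | succ m ih =>
    rcases Nat.eq_zero_or_pos m with h | h
    · subst h; simp [harmonicNum]
    · have := ih h
      rw [harm_succ]
      have : (0:ℝ) < 1/(m+1) := by positivity
      linarith

lemma exp_lb (x : ℝ) (hx : 0 ≤ x) : (1 + x/64)^(64:ℕ) ≤ Real.exp x := by
  have h := Real.add_one_le_exp (x/64)
  calc (1+x/64)^(64:ℕ) ≤ (Real.exp (x/64))^(64:ℕ) := by
        apply pow_le_pow_left₀ (by positivity) (by linarith)
    _ = Real.exp x := by
        rw [← Real.exp_nat_mul]; ring_nf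

lemma log_ub {x c : ℝ} (hx : 0 < x) (hc : 0 ≤ c) (h : x ≤ (1+c/64)^(64:ℕ)) :
    Real.log x ≤ c := by
  have h2 : x ≤ Real.exp c := h.trans (exp_lb c hc)
  exact (Real.log_le_iff_le_exp hx).mpr h2

lemma harm_le : ∀ n : ℕ, 1 ≤ n → harmonicNum n ≤ 1 + Real.log n := by
  intro n hn
  induction n with
  | zero => omega
  | succ m ih =>
    rcases Nat.eq_zero_or_pos m with h | h
    · subst h; simp [harmonicNum]
    · have hm : (1:ℝ) ≤ m := by exact_mod_cast h
      have ihm := ih h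
      rw [harm_succ]
      have hstep : (1:ℝ)/(m+1) ≤ Real.log (m+1) - Real.log m := by
        have hx : (0:ℝ) < ((m:ℝ)+1)/m := by positivity
        have h2 := Real.one_sub_inv_le_log_of_pos hx
        have h3 : Real.log (((m:ℝ)+1)/m) = Real.log (m+1) - Real.log m :=
          Real.log_div (by positivity) (by positivity)
        have h4 : (((m:ℝ)+1)/m)⁻¹ = m/(m+1) := by rw [inv_div]
        rw [h3, h4] at h2
        have h5 : 1 - (m:ℝ)/(m+1) = 1/(m+1) := by field_simp; ring
        linarith
      push_cast
      push_cast at ihm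
      linarith

-- log n + 1/2 + 1/(2n) ≤ H_n

lemma harm_ge : ∀ n : ℕ, 1 ≤ n → Real.log n + 1/2 + 1/(2*n) ≤ harmonicNum n := by
  intro n hn
  induction n with
  | zero => omega
  | succ m ih =>
    rcases Nat.eq_zero_or_pos m with h | h
    · subst h; simp [harmonicNum]; norm_num
    · have hm : (1:ℝ) ≤ m := by exact_mod_cast h
      have ihm := ih h
      rw [harm_succ]
      have hstep : Real.log (m+1) - Real.log m ≤ 1/(2*m) + 1/(2*(m+1)) := by
        set y : ℝ := ((m:ℝ)+1)/m with hy
        have hy1 : (1:ℝ) ≤ y := by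
          rw [hy, le_div_iff₀ (by positivity)]; linarith
        have hypos : (0:ℝ) < y := by linarith
        have hlogy : 0 ≤ Real.log y := Real.log_nonneg hy1
        have hs : Real.log y ≤ Real.sinh (Real.log y) := by
          rcases eq_or_lt_of_le hlogy with he | hlt
          · rw [← he]; simp
          · exact le_of_lt (Real.self_lt_sinh_iff.mpr hlt)
        rw [Real.sinh_log hypos] at hs
        have hval : (y - y⁻¹)/2 = 1/(2*m) + 1/(2*(m+1)) := by
          rw [hy, inv_div]
          field_simp
          ring
        have h3 : Real.log y = Real.log (m+1) - Real.log m := by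
          rw [hy]; exact Real.log_div (by positivity) (by positivity)
        rw [h3, hval] at hs
        exact hs
      push_cast
      push_cast at ihm
      have h8 : (1:ℝ)/(2*((m:ℝ)+1)) + 1/(2*((m:ℝ)+1)) = 1/((m:ℝ)+1) := by
        field_simp
        norm_num
      linarith

lemma log24 : (31:ℝ)/10 ≤ Real.log 24 := by
  rw [Real.le_log_iff_exp_le (by norm_num)]
  have h1 : Real.exp ((31:ℝ)/10/128) ≤ (1 - 31/10/128)⁻¹ := by
    have h2 := Real.add_one_le_exp (-((31:ℝ)/10/128))
    have h3 : (0:ℝ) < 1 - 31/10/128 := by norm_num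
    rw [Real.exp_neg] at h2
    rw [← inv_inv (Real.exp ((31:ℝ)/10/128))]
    apply inv_anti₀ h3
    linarith
  calc Real.exp ((31:ℝ)/10) = (Real.exp ((31:ℝ)/10/128))^(128:ℕ) := by
        rw [← Real.exp_nat_mul]; norm_num
    _ ≤ ((1 - (31:ℝ)/10/128)⁻¹)^(128:ℕ) := by
        apply pow_le_pow_left₀ (Real.exp_pos _).le h1
    _ ≤ 24 := by norm_num

lemma general_case (n : ℕ) (hn : 24 ≤ n) :
    ((n:ℝ)+1) * harmonicNum n - n <
      Real.exp (harmonicNum n) * ((n:ℝ)/(harmonicNum (n+1)) - Real.log (harmonicNum n)) := by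
  have hn1 : 1 ≤ n := by omega
  have hn24 : (24:ℝ) ≤ (n:ℝ) := by exact_mod_cast hn
  have hnp : (0:ℝ) < n := by linarith
  set H := harmonicNum n with hH
  set y := Real.log n with hy
  have h1H : 1 ≤ H := one_le_harm n hn1
  have hHle : H ≤ 1 + y := harm_le n hn1
  have hHge : y + 1/2 ≤ H := by
    have := harm_ge n hn1
    have : (0:ℝ) < 1/(2*(n:ℝ)) := by positivity
    have h2 := harm_ge n hn1
    linarith
  have hy31 : (31:ℝ)/10 ≤ y := by
    rw [hy]
    calc (31:ℝ)/10 ≤ Real.log 24 := log24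
      _ ≤ Real.log n := Real.log_le_log (by norm_num) hn24
  have hny : (n:ℝ) = Real.exp y := (Real.exp_log hnp).symm
  -- Taylor: n ≥ 1 + y + ... + y^6/720
  have hT : 1 + y + y^2/2 + y^3/6 + y^4/24 + y^5/120 + y^6/720 ≤ (n:ℝ) := by
    rw [hny]
    have h0 : (0:ℝ) ≤ y := by linarith
    have h1 := Real.sum_le_exp_of_nonneg h0 7
    have e : ∑ i ∈ Finset.range 7, y^i / (Nat.factorial i) =
        1 + y + y^2/2 + y^3/6 + y^4/24 + y^5/120 + y^6/720 := by
      simp [Finset.sum_range_succ, Nat.factorial]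
    rw [e] at h1
    exact h1
  -- E ≥ 1.648 n
  have hE : (1648:ℝ)/1000 * n ≤ Real.exp H := by
    have h5 : Real.exp (y + 1/2) ≤ Real.exp H := Real.exp_le_exp.mpr hHge
    rw [Real.exp_add, ← hny] at h5
    have he5 : (1648:ℝ)/1000 ≤ Real.exp (1/2) := by
      have h6 : Real.exp (1/2) * Real.exp (1/2) = Real.exp 1 := by
        rw [← Real.exp_add]; norm_num
      nlinarith [Real.exp_one_gt_d9, Real.exp_pos (1/2)]
    nlinarith [Real.exp_pos ((1:ℝ)/2)]
  -- log H ≤ y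
  have hL : Real.log H ≤ y := by
    calc Real.log H ≤ Real.log (1+y) := Real.log_le_log (by linarith) hHle
      _ ≤ (1+y) - 1 := Real.log_le_sub_one_of_pos (by linarith)
      _ = y := by ring
  -- H' bounds
  have hsucc : harmonicNum (n+1) = H + 1/(n+1) := harm_succ n
  have hH'pos : (0:ℝ) < H + 1/(n+1) := by positivity
  have hH'le : H + 1/((n:ℝ)+1) ≤ 1 + y + 1/25 := by
    have : (1:ℝ)/((n:ℝ)+1) ≤ 1/25 := by
      rw [div_le_div_iff₀ (by linarith) (by norm_num)]
      linarith
    linarith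
  have hDpos : (0:ℝ) < 1 + y + 1/25 := by linarith
  -- inner bound
  have hinner : (n:ℝ)/(1 + y + 1/25) - y ≤ (n:ℝ)/(H + 1/(n+1)) - Real.log H := by
    have hh : (n:ℝ)/(1+y+1/25) ≤ (n:ℝ)/(H + 1/(n+1)) :=
      div_le_div_of_nonneg_left hnp.le hH'pos hH'le
    linarith
  have hinner_pos : (0:ℝ) ≤ (n:ℝ)/(1 + y + 1/25) - y := by
    rw [sub_nonneg, le_div_iff₀ hDpos]
    have hy3 : (0:ℝ) ≤ y^3 := by positivity
    nlinarith [hT, hy31, mul_nonneg (sub_nonneg.mpr hy31) (sq_nonneg y),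
      sq_nonneg y, mul_nonneg (sub_nonneg.mpr hy31) hy3]
  -- core inequality
  have hcore : ((n:ℝ)+1)*(1+y) - n < (1648:ℝ)/1000 * n * ((n:ℝ)/(1+y+1/25) - y) := by
    rw [div_sub' (ne_of_gt hDpos), ← mul_div_assoc]
    rw [lt_div_iff₀ hDpos]
    rcases le_or_gt y (33/10) with hc | hc
    · nlinarith [hn24, hy31, hc, sq_nonneg ((n:ℝ) - 24),
        mul_nonneg (sub_nonneg.mpr hn24) (sub_nonneg.mpr hy31),
        mul_nonneg (sub_nonneg.mpr hn24) (sub_nonneg.mpr hc),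
        mul_nonneg (sub_nonneg.mpr hy31) (sub_nonneg.mpr hc)]
    · have c1 : (0:ℝ) ≤ y - 33/10 := by linarith
      have c2 : (0:ℝ) ≤ (y - 33/10)^2 := sq_nonneg _
      have c3 : (0:ℝ) ≤ (y - 33/10)^3 := pow_nonneg c1 3
      have c4 : (0:ℝ) ≤ (y - 33/10)^4 := pow_nonneg c1 4
      have c5 : (0:ℝ) ≤ (y - 33/10)^5 := pow_nonneg c1 5
      have c6 : (0:ℝ) ≤ (y - 33/10)^6 := pow_nonneg c1 6
      have c7 : (0:ℝ) ≤ (y - 33/10)^7 := pow_nonneg c1 7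
      have c8 : (0:ℝ) ≤ (y - 33/10)^8 := pow_nonneg c1 8
      have c9 : (0:ℝ) ≤ (y - 33/10)^9 := pow_nonneg c1 9
      have c10 : (0:ℝ) ≤ (y - 33/10)^10 := pow_nonneg c1 10
      have hP5 : 1 + y + y^2/2 + y^3/6 + y^4/24 + y^5/120 ≤ (n:ℝ) := by
        nlinarith [hT, pow_nonneg (by linarith : (0:ℝ) ≤ y) 6]
      have hs : (0:ℝ) ≤ (n:ℝ) - (1 + y + y^2/2 + y^3/6 + y^4/24 + y^5/120) := by linarith
      have ha : (0:ℝ) < 1648/1000*(1 + y + y^2/2 + y^3/6 + y^4/24 + y^5/120)^2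
          - 2648/1000*y*(y+26/25)*(1 + y + y^2/2 + y^3/6 + y^4/24 + y^5/120)
          - (1+y)*(y+26/25) := by
        nlinarith [c1, c2, c3, c4, c5, c6, c7, c8, c9, c10]
      have hb : (0:ℝ) ≤ 3296/1000*(1 + y + y^2/2 + y^3/6 + y^4/24 + y^5/120)
          - 2648/1000*y*(y+26/25) := by
        nlinarith [c1, c2, c3, c4, c5]
      have hbs : (0:ℝ) ≤ ((n:ℝ) - (1 + y + y^2/2 + y^3/6 + y^4/24 + y^5/120)) *
          (3296/1000*(1 + y + y^2/2 + y^3/6 + y^4/24 + y^5/120) - 2648/1000*y*(y+26/25)) :=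
        mul_nonneg hs hb
      have hss : (0:ℝ) ≤ ((n:ℝ) - (1 + y + y^2/2 + y^3/6 + y^4/24 + y^5/120))^2 := sq_nonneg _
      nlinarith [ha, hbs, hss]
  -- assemble
  rw [hsucc]
  calc ((n:ℝ)+1) * H - n ≤ ((n:ℝ)+1)*(1+y) - n := by nlinarith [hHle]
    _ < (1648:ℝ)/1000 * n * ((n:ℝ)/(1+y+1/25) - y) := hcore
    _ ≤ Real.exp H * ((n:ℝ)/(1+y+1/25) - y) := by
        apply mul_le_mul_of_nonneg_right hE hinner_pos
    _ ≤ Real.exp H * ((n:ℝ)/(H + 1/(n+1)) - Real.log H) := by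
        apply mul_le_mul_of_nonneg_left hinner (Real.exp_pos H).le

lemma key_reduction (n : ℕ) (hn : 1 ≤ n)
    (hkey : ((n:ℝ)+1) * harmonicNum n - n <
      Real.exp (harmonicNum n) * ((n:ℝ)/(harmonicNum (n+1)) - Real.log (harmonicNum n))) :
    B n < B (n+1) := by
  have hn1 : (1:ℝ) ≤ n := by exact_mod_cast hn
  have hnp : (0:ℝ) < (n:ℝ) := by linarith
  rw [B, B, div_lt_div_iff₀ hnp (by push_cast; linarith)]
  push_cast
  set H := harmonicNum n with hH
  set H' := harmonicNum (n+1) with hH'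
  set E := Real.exp H with hE
  set L := Real.log H with hL
  set L' := Real.log H' with hL'
  have h1H : 1 ≤ H := one_le_harm n hn
  have hd : (0:ℝ) < 1/((n:ℝ)+1) := by positivity
  set d : ℝ := 1/((n:ℝ)+1) with hdd
  have hd1 : d * ((n:ℝ)+1) = 1 := by rw [hdd]; field_simp
  have hsucc : H' = H + d := harm_succ n
  have hH'pos : (0:ℝ) < H' := by rw [hsucc]; linarith
  have hH'ne : H' ≠ 0 := ne_of_gt hH'pos
  have hEpos : (0:ℝ) < E := Real.exp_pos H
  have hLpos : (0:ℝ) ≤ L := Real.log_nonneg h1H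
  -- L' ≥ L + d/H'
  have hlog : L + d/H' ≤ L' := by
    have h0 : Real.log (H'/H) = L' - L := Real.log_div hH'ne (by linarith)
    have h2 : 1 - (H'/H)⁻¹ ≤ Real.log (H'/H) :=
      Real.one_sub_inv_le_log_of_pos (by positivity)
    have h3 : (H'/H)⁻¹ = H/H' := by
      rw [inv_div]
    have h4 : 1 - H/H' = d/H' := by
      have hne2 : H + d ≠ 0 := ne_of_gt (by linarith : (0:ℝ) < H + d)
      rw [hsucc]
      field_simp
      ring
    rw [h3, h0] at h2
    linarith
  have hL'pos : (0:ℝ) ≤ L' := by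
    have : (0:ℝ) ≤ d/H' := by positivity
    linarith
  -- exp H' ≥ E*(1+d)
  have hexp : E * (1+d) ≤ Real.exp H' := by
    rw [hsucc, Real.exp_add, ← hE]
    have h5 := Real.add_one_le_exp d
    have := mul_le_mul_of_nonneg_left h5 hEpos.le
    linarith
  have hEL' : E * (1+d) * (L + d/H') ≤ Real.exp H' * L' := by
    have s1 : E * (1+d) * (L + d/H') ≤ E * (1+d) * L' :=
      mul_le_mul_of_nonneg_left hlog (by nlinarith)
    have s2 : E * (1+d) * L' ≤ Real.exp H' * L' :=
      mul_le_mul_of_nonneg_right hexp hL'pos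
    linarith
  have expand : E * (1+d) * (L + d/H') =
      E*L + d*(E*L) + (1+d)*(d*(E/H')) := by ring
  have c1 : (n:ℝ)*H + (n:ℝ)*d + (n:ℝ)*(E*L) + (n:ℝ)*(d*(E*L)) + (n:ℝ)*((1+d)*(d*(E/H')))
      ≤ (n:ℝ)*(H' + Real.exp H' * L') := by
    have t := mul_le_mul_of_nonneg_left hEL' hnp.le
    rw [expand] at t
    have hs : (n:ℝ)*H' = (n:ℝ)*H + (n:ℝ)*d := by rw [hsucc]; ring
    nlinarith [t, hs]
  have c2 : (n:ℝ)*(d*(E/H')) ≤ (n:ℝ)*((1+d)*(d*(E/H'))) := by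
    have h6 : (0:ℝ) ≤ d*(E/H') := by positivity
    have h7 : (0:ℝ) ≤ (n:ℝ)*d*(d*(E/H')) :=
      mul_nonneg (mul_nonneg hnp.le hd.le) h6
    nlinarith [h7]
  have k2 : d * (((n:ℝ)+1)*H - n) < d * (E * ((n:ℝ)/H' - L)) :=
    mul_lt_mul_of_pos_left hkey hd
  have e1 : d * (((n:ℝ)+1)*H - n) = H - (n:ℝ)*d := by
    linear_combination H * hd1 - (n:ℝ)*d + (n:ℝ)*d
  have e2 : d * (E * ((n:ℝ)/H' - L)) = (n:ℝ)*(d*(E/H')) - d*(E*L) := by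
    field_simp
  rw [e1, e2] at k2
  have c3 : (n:ℝ)*(d*(E*L)) + d*(E*L) - E*L = 0 := by
    linear_combination (E*L) * hd1
  -- goal: (H + E*L) * (n+1) < (H' + exp H' * L') * n
  linarith [c1, c2, k2, c3]


lemma base_case (n : ℕ) (hn : 1 ≤ n) (h h' lam q : ℝ)
    (hH : harmonicNum n = h) (hH' : harmonicNum (n+1) = h')
    (hq0 : 0 ≤ q) (hq : q ≤ (1+h/64)^(64:ℕ))
    (hlam0 : 0 ≤ lam) (hlam : h ≤ (1+lam/64)^(64:ℕ))
    (h1 : 1 ≤ h)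
    (hpos : 0 ≤ (n:ℝ)/h' - lam)
    (hfin : ((n:ℝ)+1)*h - n < q * ((n:ℝ)/h' - lam)) :
    ((n:ℝ)+1) * harmonicNum n - n <
      Real.exp (harmonicNum n) * ((n:ℝ)/(harmonicNum (n+1)) - Real.log (harmonicNum n)) := by
  rw [hH, hH']
  have hE : q ≤ Real.exp h := hq.trans (exp_lb h (by linarith))
  have hL : Real.log h ≤ lam := log_ub (by linarith) hlam0 hlam
  have s1 : q * ((n:ℝ)/h' - lam) ≤ Real.exp h * ((n:ℝ)/h' - lam) :=
    mul_le_mul_of_nonneg_right hE hpos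
  have s2 : Real.exp h * ((n:ℝ)/h' - lam) ≤ Real.exp h * ((n:ℝ)/h' - Real.log h) :=
    mul_le_mul_of_nonneg_left (by linarith) (Real.exp_pos h).le
  linarith

lemma harmVal1 : harmonicNum 1 = (1 : ℝ) := by
  norm_num [harmonicNum, Finset.sum_range_succ]

lemma harmVal2 : harmonicNum 2 = (3/2 : ℝ) := by
  norm_num [harmonicNum, Finset.sum_range_succ]

lemma harmVal3 : harmonicNum 3 = (11/6 : ℝ) := by
  norm_num [harmonicNum, Finset.sum_range_succ]

lemma harmVal4 : harmonicNum 4 = (25/12 : ℝ) := by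
  norm_num [harmonicNum, Finset.sum_range_succ]

lemma harmVal5 : harmonicNum 5 = (137/60 : ℝ) := by
  norm_num [harmonicNum, Finset.sum_range_succ]

lemma harmVal6 : harmonicNum 6 = (49/20 : ℝ) := by
  norm_num [harmonicNum, Finset.sum_range_succ]

lemma harmVal7 : harmonicNum 7 = (363/140 : ℝ) := by
  norm_num [harmonicNum, Finset.sum_range_succ]

lemma harmVal8 : harmonicNum 8 = (761/280 : ℝ) := by
  norm_num [harmonicNum, Finset.sum_range_succ]

lemma harmVal9 : harmonicNum 9 = (7129/2520 : ℝ) := by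
  norm_num [harmonicNum, Finset.sum_range_succ]

lemma harmVal10 : harmonicNum 10 = (7381/2520 : ℝ) := by
  norm_num [harmonicNum, Finset.sum_range_succ]

lemma harmVal11 : harmonicNum 11 = (83711/27720 : ℝ) := by
  norm_num [harmonicNum, Finset.sum_range_succ]

lemma harmVal12 : harmonicNum 12 = (86021/27720 : ℝ) := by
  norm_num [harmonicNum, Finset.sum_range_succ]

lemma harmVal13 : harmonicNum 13 = (1145993/360360 : ℝ) := by
  norm_num [harmonicNum, Finset.sum_range_succ]

lemma harmVal14 : harmonicNum 14 = (1171733/360360 : ℝ) := by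
  norm_num [harmonicNum, Finset.sum_range_succ]

lemma harmVal15 : harmonicNum 15 = (1195757/360360 : ℝ) := by
  norm_num [harmonicNum, Finset.sum_range_succ]

lemma harmVal16 : harmonicNum 16 = (2436559/720720 : ℝ) := by
  norm_num [harmonicNum, Finset.sum_range_succ]

lemma harmVal17 : harmonicNum 17 = (42142223/12252240 : ℝ) := by
  norm_num [harmonicNum, Finset.sum_range_succ]

lemma harmVal18 : harmonicNum 18 = (14274301/4084080 : ℝ) := by
  norm_num [harmonicNum, Finset.sum_range_succ]

lemma harmVal19 : harmonicNum 19 = (275295799/77597520 : ℝ) := by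
  norm_num [harmonicNum, Finset.sum_range_succ]

lemma harmVal20 : harmonicNum 20 = (55835135/15519504 : ℝ) := by
  norm_num [harmonicNum, Finset.sum_range_succ]

lemma harmVal21 : harmonicNum 21 = (18858053/5173168 : ℝ) := by
  norm_num [harmonicNum, Finset.sum_range_succ]

lemma harmVal22 : harmonicNum 22 = (19093197/5173168 : ℝ) := by
  norm_num [harmonicNum, Finset.sum_range_succ]

lemma harmVal23 : harmonicNum 23 = (444316699/118982864 : ℝ) := by
  norm_num [harmonicNum, Finset.sum_range_succ]

lemma harmVal24 : harmonicNum 24 = (1347822955/356948592 : ℝ) := by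
  norm_num [harmonicNum, Finset.sum_range_succ]

lemma keyB1 : (((1:ℕ):ℝ)+1) * harmonicNum 1 - (1:ℕ) <
    Real.exp (harmonicNum 1) * (((1:ℕ):ℝ)/(harmonicNum 2) - Real.log (harmonicNum 1)) := by
  apply base_case 1 (by norm_num) (1 : ℝ) (3/2 : ℝ) (0 : ℝ) (2 : ℝ)
    harmVal1 harmVal2 (by norm_num) (by norm_num) (by norm_num) (by norm_num)
    (by norm_num) (by push_cast; norm_num) (by push_cast; norm_num)

lemma keyB2 : (((2:ℕ):ℝ)+1) * harmonicNum 2 - (2:ℕ) <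
    Real.exp (harmonicNum 2) * (((2:ℕ):ℝ)/(harmonicNum 3) - Real.log (harmonicNum 2)) := by
  apply base_case 2 (by norm_num) (3/2 : ℝ) (11/6 : ℝ) (407/1000 : ℝ) (1101/250 : ℝ)
    harmVal2 harmVal3 (by norm_num) (by norm_num) (by norm_num) (by norm_num)
    (by norm_num) (by push_cast; norm_num) (by push_cast; norm_num)

lemma keyB3 : (((3:ℕ):ℝ)+1) * harmonicNum 3 - (3:ℕ) <
    Real.exp (harmonicNum 3) * (((3:ℕ):ℝ)/(harmonicNum 4) - Real.log (harmonicNum 3)) := by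
  apply base_case 3 (by norm_num) (11/6 : ℝ) (25/12 : ℝ) (61/100 : ℝ) (1219/200 : ℝ)
    harmVal3 harmVal4 (by norm_num) (by norm_num) (by norm_num) (by norm_num)
    (by norm_num) (by push_cast; norm_num) (by push_cast; norm_num)

lemma keyB4 : (((4:ℕ):ℝ)+1) * harmonicNum 4 - (4:ℕ) <
    Real.exp (harmonicNum 4) * (((4:ℕ):ℝ)/(harmonicNum 5) - Real.log (harmonicNum 4)) := by
  apply base_case 4 (by norm_num) (25/12 : ℝ) (137/60 : ℝ) (739/1000 : ℝ) (7769/1000 : ℝ)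
    harmVal4 harmVal5 (by norm_num) (by norm_num) (by norm_num) (by norm_num)
    (by norm_num) (by push_cast; norm_num) (by push_cast; norm_num)

lemma keyB5 : (((5:ℕ):ℝ)+1) * harmonicNum 5 - (5:ℕ) <
    Real.exp (harmonicNum 5) * (((5:ℕ):ℝ)/(harmonicNum 6) - Real.log (harmonicNum 5)) := by
  apply base_case 5 (by norm_num) (137/60 : ℝ) (49/20 : ℝ) (831/1000 : ℝ) (4713/500 : ℝ)
    harmVal5 harmVal6 (by norm_num) (by norm_num) (by norm_num) (by norm_num)
    (by norm_num) (by push_cast; norm_num) (by push_cast; norm_num)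

lemma keyB6 : (((6:ℕ):ℝ)+1) * harmonicNum 6 - (6:ℕ) <
    Real.exp (harmonicNum 6) * (((6:ℕ):ℝ)/(harmonicNum 7) - Real.log (harmonicNum 6)) := by
  apply base_case 6 (by norm_num) (49/20 : ℝ) (363/140 : ℝ) (903/1000 : ℝ) (1107/100 : ℝ)
    harmVal6 harmVal7 (by norm_num) (by norm_num) (by norm_num) (by norm_num)
    (by norm_num) (by push_cast; norm_num) (by push_cast; norm_num)

lemma keyB7 : (((7:ℕ):ℝ)+1) * harmonicNum 7 - (7:ℕ) <
    Real.exp (harmonicNum 7) * (((7:ℕ):ℝ)/(harmonicNum 8) - Real.log (harmonicNum 7)) := by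
  apply base_case 7 (by norm_num) (363/140 : ℝ) (761/280 : ℝ) (24/25 : ℝ) (12701/1000 : ℝ)
    harmVal7 harmVal8 (by norm_num) (by norm_num) (by norm_num) (by norm_num)
    (by norm_num) (by push_cast; norm_num) (by push_cast; norm_num)

lemma keyB8 : (((8:ℕ):ℝ)+1) * harmonicNum 8 - (8:ℕ) <
    Real.exp (harmonicNum 8) * (((8:ℕ):ℝ)/(harmonicNum 9) - Real.log (harmonicNum 8)) := by
  apply base_case 8 (by norm_num) (761/280 : ℝ) (7129/2520 : ℝ) (126/125 : ℝ) (14321/1000 : ℝ)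
    harmVal8 harmVal9 (by norm_num) (by norm_num) (by norm_num) (by norm_num)
    (by norm_num) (by push_cast; norm_num) (by push_cast; norm_num)

lemma keyB9 : (((9:ℕ):ℝ)+1) * harmonicNum 9 - (9:ℕ) <
    Real.exp (harmonicNum 9) * (((9:ℕ):ℝ)/(harmonicNum 10) - Real.log (harmonicNum 9)) := by
  apply base_case 9 (by norm_num) (7129/2520 : ℝ) (7381/2520 : ℝ) (1049/1000 : ℝ) (1593/100 : ℝ)
    harmVal9 harmVal10 (by norm_num) (by norm_num) (by norm_num) (by norm_num)
    (by norm_num) (by push_cast; norm_num) (by push_cast; norm_num)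

lemma keyB10 : (((10:ℕ):ℝ)+1) * harmonicNum 10 - (10:ℕ) <
    Real.exp (harmonicNum 10) * (((10:ℕ):ℝ)/(harmonicNum 11) - Real.log (harmonicNum 10)) := by
  apply base_case 10 (by norm_num) (7381/2520 : ℝ) (83711/27720 : ℝ) (271/250 : ℝ) (1753/100 : ℝ)
    harmVal10 harmVal11 (by norm_num) (by norm_num) (by norm_num) (by norm_num)
    (by norm_num) (by push_cast; norm_num) (by push_cast; norm_num)

lemma keyB11 : (((11:ℕ):ℝ)+1) * harmonicNum 11 - (11:ℕ) <
    Real.exp (harmonicNum 11) * (((11:ℕ):ℝ)/(harmonicNum 12) - Real.log (harmonicNum 11)) := by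
  apply base_case 11 (by norm_num) (83711/27720 : ℝ) (86021/27720 : ℝ) (223/200 : ℝ) (19121/1000 : ℝ)
    harmVal11 harmVal12 (by norm_num) (by norm_num) (by norm_num) (by norm_num)
    (by norm_num) (by push_cast; norm_num) (by push_cast; norm_num)

lemma keyB12 : (((12:ℕ):ℝ)+1) * harmonicNum 12 - (12:ℕ) <
    Real.exp (harmonicNum 12) * (((12:ℕ):ℝ)/(harmonicNum 13) - Real.log (harmonicNum 12)) := by
  apply base_case 12 (by norm_num) (86021/27720 : ℝ) (1145993/360360 : ℝ) (1143/1000 : ℝ) (20703/1000 : ℝ)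
    harmVal12 harmVal13 (by norm_num) (by norm_num) (by norm_num) (by norm_num)
    (by norm_num) (by push_cast; norm_num) (by push_cast; norm_num)

lemma keyB13 : (((13:ℕ):ℝ)+1) * harmonicNum 13 - (13:ℕ) <
    Real.exp (harmonicNum 13) * (((13:ℕ):ℝ)/(harmonicNum 14) - Real.log (harmonicNum 13)) := by
  apply base_case 13 (by norm_num) (1145993/360360 : ℝ) (1171733/360360 : ℝ) (146/125 : ℝ) (22279/1000 : ℝ)
    harmVal13 harmVal14 (by norm_num) (by norm_num) (by norm_num) (by norm_num)
    (by norm_num) (by push_cast; norm_num) (by push_cast; norm_num)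

lemma keyB14 : (((14:ℕ):ℝ)+1) * harmonicNum 14 - (14:ℕ) <
    Real.exp (harmonicNum 14) * (((14:ℕ):ℝ)/(harmonicNum 15) - Real.log (harmonicNum 14)) := by
  apply base_case 14 (by norm_num) (1171733/360360 : ℝ) (1195757/360360 : ℝ) (1191/1000 : ℝ) (23847/1000 : ℝ)
    harmVal14 harmVal15 (by norm_num) (by norm_num) (by norm_num) (by norm_num)
    (by norm_num) (by push_cast; norm_num) (by push_cast; norm_num)

lemma keyB15 : (((15:ℕ):ℝ)+1) * harmonicNum 15 - (15:ℕ) <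
    Real.exp (harmonicNum 15) * (((15:ℕ):ℝ)/(harmonicNum 16) - Real.log (harmonicNum 15)) := by
  apply base_case 15 (by norm_num) (1195757/360360 : ℝ) (2436559/720720 : ℝ) (1211/1000 : ℝ) (3176/125 : ℝ)
    harmVal15 harmVal16 (by norm_num) (by norm_num) (by norm_num) (by norm_num)
    (by norm_num) (by push_cast; norm_num) (by push_cast; norm_num)

lemma keyB16 : (((16:ℕ):ℝ)+1) * harmonicNum 16 - (16:ℕ) <
    Real.exp (harmonicNum 16) * (((16:ℕ):ℝ)/(harmonicNum 17) - Real.log (harmonicNum 16)) := by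
  apply base_case 16 (by norm_num) (2436559/720720 : ℝ) (42142223/12252240 : ℝ) (123/100 : ℝ) (13481/500 : ℝ)
    harmVal16 harmVal17 (by norm_num) (by norm_num) (by norm_num) (by norm_num)
    (by norm_num) (by push_cast; norm_num) (by push_cast; norm_num)

lemma keyB17 : (((17:ℕ):ℝ)+1) * harmonicNum 17 - (17:ℕ) <
    Real.exp (harmonicNum 17) * (((17:ℕ):ℝ)/(harmonicNum 18) - Real.log (harmonicNum 17)) := by
  apply base_case 17 (by norm_num) (42142223/12252240 : ℝ) (14274301/4084080 : ℝ) (156/125 : ℝ) (28511/1000 : ℝ)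
    harmVal17 harmVal18 (by norm_num) (by norm_num) (by norm_num) (by norm_num)
    (by norm_num) (by push_cast; norm_num) (by push_cast; norm_num)

lemma keyB18 : (((18:ℕ):ℝ)+1) * harmonicNum 18 - (18:ℕ) <
    Real.exp (harmonicNum 18) * (((18:ℕ):ℝ)/(harmonicNum 19) - Real.log (harmonicNum 18)) := by
  apply base_case 18 (by norm_num) (14274301/4084080 : ℝ) (275295799/77597520 : ℝ) (158/125 : ℝ) (15027/500 : ℝ)
    harmVal18 harmVal19 (by norm_num) (by norm_num) (by norm_num) (by norm_num)
    (by norm_num) (by push_cast; norm_num) (by push_cast; norm_num)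

lemma keyB19 : (((19:ℕ):ℝ)+1) * harmonicNum 19 - (19:ℕ) <
    Real.exp (harmonicNum 19) * (((19:ℕ):ℝ)/(harmonicNum 20) - Real.log (harmonicNum 19)) := by
  apply base_case 19 (by norm_num) (275295799/77597520 : ℝ) (55835135/15519504 : ℝ) (1279/1000 : ℝ) (31591/1000 : ℝ)
    harmVal19 harmVal20 (by norm_num) (by norm_num) (by norm_num) (by norm_num)
    (by norm_num) (by push_cast; norm_num) (by push_cast; norm_num)

lemma keyB20 : (((20:ℕ):ℝ)+1) * harmonicNum 20 - (20:ℕ) <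
    Real.exp (harmonicNum 20) * (((20:ℕ):ℝ)/(harmonicNum 21) - Real.log (harmonicNum 20)) := by
  apply base_case 20 (by norm_num) (55835135/15519504 : ℝ) (18858053/5173168 : ℝ) (647/500 : ℝ) (33123/1000 : ℝ)
    harmVal20 harmVal21 (by norm_num) (by norm_num) (by norm_num) (by norm_num)
    (by norm_num) (by push_cast; norm_num) (by push_cast; norm_num)

lemma keyB21 : (((21:ℕ):ℝ)+1) * harmonicNum 21 - (21:ℕ) <
    Real.exp (harmonicNum 21) * (((21:ℕ):ℝ)/(harmonicNum 22) - Real.log (harmonicNum 21)) := by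
  apply base_case 21 (by norm_num) (18858053/5173168 : ℝ) (19093197/5173168 : ℝ) (1307/1000 : ℝ) (693/20 : ℝ)
    harmVal21 harmVal22 (by norm_num) (by norm_num) (by norm_num) (by norm_num)
    (by norm_num) (by push_cast; norm_num) (by push_cast; norm_num)

lemma keyB22 : (((22:ℕ):ℝ)+1) * harmonicNum 22 - (22:ℕ) <
    Real.exp (harmonicNum 22) * (((22:ℕ):ℝ)/(harmonicNum 23) - Real.log (harmonicNum 22)) := by
  apply base_case 22 (by norm_num) (19093197/5173168 : ℝ) (444316699/118982864 : ℝ) (33/25 : ℝ) (9043/250 : ℝ)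
    harmVal22 harmVal23 (by norm_num) (by norm_num) (by norm_num) (by norm_num)
    (by norm_num) (by push_cast; norm_num) (by push_cast; norm_num)

lemma keyB23 : (((23:ℕ):ℝ)+1) * harmonicNum 23 - (23:ℕ) <
    Real.exp (harmonicNum 23) * (((23:ℕ):ℝ)/(harmonicNum 24) - Real.log (harmonicNum 23)) := by
  apply base_case 23 (by norm_num) (444316699/118982864 : ℝ) (1347822955/356948592 : ℝ) (333/250 : ℝ) (3769/100 : ℝ)
    harmVal23 harmVal24 (by norm_num) (by norm_num) (by norm_num) (by norm_num)
    (by norm_num) (by push_cast; norm_num) (by push_cast; norm_num)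


theorem B_strictly_increasing :
    ∀ n : ℕ, 1 ≤ n → B n < B (n + 1) := by
  intro n hn
  apply key_reduction n hn
  rcases le_or_gt 24 n with h | h
  · exact general_case n h
  · interval_cases n
    · exact keyB1
    · exact keyB2
    · exact keyB3
    · exact keyB4
    · exact keyB5
    · exact keyB6
    · exact keyB7
    · exact keyB8
    · exact keyB9
    · exact keyB10
    · exact keyB11
    · exact keyB12
    · exact keyB13
    · exact keyB14
    · exact keyB15
    · exact keyB16
    · exact keyB17
    · exact keyB18
    · exact keyB19
    · exact keyB20
    · exact keyB21
    · exact keyB22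
    · exact keyB23
end

section
/- For every real x ≥ e^4, the derivative of L satisfies L'(x) > 0, where L(x) := (H(x) + exp(H(x))·log(H(x)))/x. -/
open Real

/-- The digamma function `ψ(y) = Γ'(y)/Γ(y)`, i.e. the derivative of `log Γ`. -/
noncomputable def digamma (y : ℝ) : ℝ := deriv (fun t : ℝ => Real.log (Real.Gamma t)) y

/-- The continuous extension of the harmonic numbers: `H(x) = ψ(x+1) + γ`. -/
noncomputable def H (x : ℝ) : ℝ := digamma (x + 1) + Real.eulerMascheroniConstant

/-- `L(x) = (H(x) + exp(H(x))·log(H(x)))/x`. -/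
noncomputable def L (x : ℝ) : ℝ := (H x + Real.exp (H x) * Real.log (H x)) / x

/-- `N(x) = x·H'(x) − H(x) + exp(H(x))·((x·H'(x) − 1)·log(H(x)) + x·H'(x)/H(x))`. -/
noncomputable def N (x : ℝ) : ℝ :=
  x * deriv H x - H x +
    Real.exp (H x) * ((x * deriv H x - 1) * Real.log (H x) + x * deriv H x / H x)

open Set Filter Topology

lemma gamma_analytic : AnalyticOnNhd ℝ Real.Gamma (Set.Ioi 0) := by
  intro y hy
  have hU : {z : ℂ | 0 < z.re} ∈ 𝓝 (y : ℂ) := by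
    refine (isOpen_lt continuous_const Complex.continuous_re).mem_nhds ?_
    simpa using (hy : (0:ℝ) < y)
  have hc : AnalyticAt ℂ Complex.Gamma (y : ℂ) := by
    refine DifferentiableOn.analyticAt (fun z hz => (Complex.differentiableAt_Gamma z
      fun m => ?_).differentiableWithinAt) hU
    intro h
    rw [h] at hz
    simp only [Set.mem_setOf_eq, Complex.neg_re, Complex.natCast_re] at hz
    have : (0:ℝ) ≤ m := Nat.cast_nonneg m
    linarith
  have h2 : AnalyticAt ℝ (fun t : ℝ => (Complex.Gamma (t : ℂ)).re) y :=
    (Complex.reCLM.analyticAt _).comp ((hc.restrictScalars).comp (Complex.ofRealCLM.analyticAt y))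
  refine h2.congr (Filter.Eventually.of_forall fun t => ?_)
  simp only []; rw [Complex.Gamma_ofReal, Complex.ofReal_re]

lemma gamma_diff {y : ℝ} (hy : 0 < y) : DifferentiableAt ℝ Real.Gamma y :=
  Real.differentiableAt_Gamma fun m => by
    have : (0:ℝ) ≤ m := Nat.cast_nonneg m
    intro h; rw [h] at hy; linarith

lemma digamma_eventually {y : ℝ} (hy : 0 < y) :
    digamma =ᶠ[𝓝 y] fun t => deriv Real.Gamma t / Real.Gamma t := by
  filter_upwards [eventually_gt_nhds hy] with t ht
  rw [digamma, deriv.log (gamma_diff ht) (Real.Gamma_pos_of_pos ht).ne']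

lemma digamma_diff {y : ℝ} (hy : 0 < y) : DifferentiableAt ℝ digamma y := by
  have h1 : DifferentiableAt ℝ (fun t => deriv Real.Gamma t / Real.Gamma t) y :=
    ((gamma_analytic.deriv_of_isOpen isOpen_Ioi y hy).differentiableAt).div (gamma_diff hy)
      (Real.Gamma_pos_of_pos hy).ne'
  exact h1.congr_of_eventuallyEq (digamma_eventually hy)

lemma logGamma_diff {y : ℝ} (hy : 0 < y) :
    DifferentiableAt ℝ (Real.log ∘ Real.Gamma) y :=
  (gamma_diff hy).log (Real.Gamma_pos_of_pos hy).ne'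

lemma digamma_eq_deriv (y : ℝ) : digamma y = deriv (Real.log ∘ Real.Gamma) y := rfl

lemma logGamma_succ {y : ℝ} (hy : 0 < y) :
    (Real.log ∘ Real.Gamma) (y + 1) = (Real.log ∘ Real.Gamma) y + Real.log y := by
  simp only [Function.comp_apply, Real.Gamma_add_one hy.ne',
    Real.log_mul hy.ne' (Real.Gamma_pos_of_pos hy).ne']
  ring

lemma digamma_monotone : MonotoneOn digamma (Set.Ioi 0) := by
  have h := Real.convexOn_log_Gamma.monotoneOn_deriv
    (fun y hy => logGamma_diff (Set.mem_Ioi.mp hy))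
  intro a ha b hb hab
  rw [digamma_eq_deriv, digamma_eq_deriv]
  exact h ha hb hab

lemma log_le_digamma_succ {y : ℝ} (hy : 0 < y) : Real.log y ≤ digamma (y + 1) := by
  have h := Real.convexOn_log_Gamma.slope_le_deriv (Set.mem_Ioi.mpr hy)
    (Set.mem_Ioi.mpr (by linarith : (0:ℝ) < y + 1)) (by linarith)
    (logGamma_diff (by linarith))
  rw [slope_def_field, logGamma_succ hy] at h
  rw [digamma_eq_deriv]
  calc Real.log y = ((Real.log ∘ Real.Gamma) y + Real.log y - (Real.log ∘ Real.Gamma) y)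
      / (y + 1 - y) := by field_simp; ring
    _ ≤ _ := h

lemma digamma_le_log {y : ℝ} (hy : 0 < y) : digamma y ≤ Real.log y := by
  have h := Real.convexOn_log_Gamma.deriv_le_slope (Set.mem_Ioi.mpr hy)
    (Set.mem_Ioi.mpr (by linarith : (0:ℝ) < y + 1)) (by linarith)
    (logGamma_diff hy)
  rw [slope_def_field, logGamma_succ hy] at h
  rw [digamma_eq_deriv]
  calc deriv (Real.log ∘ Real.Gamma) y ≤ ((Real.log ∘ Real.Gamma) y + Real.log y
      - (Real.log ∘ Real.Gamma) y) / (y + 1 - y) := h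
    _ = Real.log y := by field_simp; ring

lemma digamma_rec {y : ℝ} (hy : 0 < y) : digamma (y + 1) = digamma y + 1 / y := by
  rw [digamma_eq_deriv, ← deriv_comp_add_const]
  have hev : (fun t => (Real.log ∘ Real.Gamma) (t + 1))
      =ᶠ[𝓝 y] fun t => (Real.log ∘ Real.Gamma) t + Real.log t := by
    filter_upwards [eventually_gt_nhds hy] with t ht
    exact logGamma_succ ht
  rw [hev.deriv_eq, deriv_fun_add (logGamma_diff hy) (Real.differentiableAt_log hy.ne'),
    Real.deriv_log, digamma_eq_deriv, one_div]

lemma deriv_digamma_rec {y : ℝ} (hy : 0 < y) :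
    deriv digamma (y + 1) = deriv digamma y - 1 / y ^ 2 := by
  rw [← deriv_comp_add_const]
  have hev : (fun t => digamma (t + 1)) =ᶠ[𝓝 y] fun t => digamma t + t⁻¹ := by
    filter_upwards [eventually_gt_nhds hy] with t ht
    rw [digamma_rec ht, one_div]
  rw [hev.deriv_eq, deriv_fun_add (digamma_diff hy) (differentiableAt_inv hy.ne'), deriv_inv]
  rw [one_div]
  ring

lemma deriv_digamma_nonneg {y : ℝ} (hy : 0 < y) : 0 ≤ deriv digamma y := by
  have hd : HasDerivAt digamma (deriv digamma y) y := (digamma_diff hy).hasDerivAt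
  have h1 := hasDerivAt_iff_tendsto_slope.mp hd
  have h2 : Tendsto (slope digamma y) (𝓝[>] y) (𝓝 (deriv digamma y)) :=
    h1.mono_left (nhdsWithin_mono _ fun z hz => ne_of_gt hz)
  refine ge_of_tendsto h2 ?_
  filter_upwards [self_mem_nhdsWithin] with z hz
  have hz' : y < z := hz
  have hmono : digamma y ≤ digamma z :=
    digamma_monotone (Set.mem_Ioi.mpr hy) (Set.mem_Ioi.mpr (hy.trans hz')) hz'.le
  rw [slope_def_field]
  apply div_nonneg (by linarith) (by linarith)

lemma deriv_digamma_ge_aux (n : ℕ) : ∀ y : ℝ, 0 < y →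
    1 / y - 1 / (y + n) ≤ deriv digamma y := by
  induction n with
  | zero => intro y hy; simpa using deriv_digamma_nonneg hy
  | succ n ih =>
    intro y hy
    have h1 : deriv digamma y = deriv digamma (y + 1) + 1 / y ^ 2 := by
      rw [deriv_digamma_rec hy]; ring
    have h2 := ih (y + 1) (by linarith)
    have hre : y + 1 + (n : ℝ) = y + ((n : ℕ) + 1 : ℕ) := by push_cast; ring
    rw [hre] at h2
    have h3 : 1 / y - 1 / (y + 1) ≤ 1 / y ^ 2 := by
      have he : (1:ℝ)/y - 1/(y+1) = 1/(y*(y+1)) := by field_simp; ring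
      rw [he]
      apply one_div_le_one_div_of_le (by positivity)
      nlinarith
    linarith

lemma deriv_digamma_ge {y : ℝ} (hy : 0 < y) : 1 / y ≤ deriv digamma y := by
  have h0 : Tendsto (fun n : ℕ => y + (n : ℝ)) atTop atTop :=
    tendsto_atTop_add_const_left _ y tendsto_natCast_atTop_atTop
  have h1 : Tendsto (fun n : ℕ => 1 / (y + (n : ℝ))) atTop (𝓝 0) := by
    simpa [one_div, Pi.inv_def] using h0.inv_tendsto_atTop
  have h2 : Tendsto (fun n : ℕ => 1 / y - 1 / (y + (n : ℝ))) atTop (𝓝 (1 / y)) := by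
    simpa using tendsto_const_nhds.sub h1
  exact le_of_tendsto h2 (Filter.Eventually.of_forall fun n => deriv_digamma_ge_aux n y hy)

set_option maxHeartbeats 1000000 in
theorem deriv_L_pos (x : ℝ) (hx : Real.exp 4 ≤ x) : 0 < deriv L x := by
  -- numeric preliminaries
  have he1 : (2.7182818283 : ℝ) < Real.exp 1 := Real.exp_one_gt_d9
  have hexp4 : (54.5 : ℝ) < Real.exp 4 := by
    have h4 : Real.exp 4 = (Real.exp 1) ^ (4 : ℕ) := by
      rw [← Real.exp_nat_mul]; norm_num
    calc (54.5:ℝ) < 2.7182818283 ^ (4:ℕ) := by norm_num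
      _ < (Real.exp 1) ^ (4:ℕ) := by
          exact pow_lt_pow_left₀ he1 (by norm_num) (by norm_num)
      _ = Real.exp 4 := h4.symm
  have hx54 : (54.5 : ℝ) < x := lt_of_lt_of_le hexp4 hx
  have hx0 : (0 : ℝ) < x := by linarith
  have hx10 : (0 : ℝ) < x + 1 := by linarith
  have hlogx : (4 : ℝ) ≤ Real.log x := by
    rw [← Real.log_exp 4]
    exact Real.log_le_log (Real.exp_pos 4) hx
  have hγ1 : (1/2 : ℝ) < Real.eulerMascheroniConstant :=
    Real.one_half_lt_eulerMascheroniConstant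
  have hγ2 : Real.eulerMascheroniConstant < 2/3 :=
    Real.eulerMascheroniConstant_lt_two_thirds
  -- bounds on h := H x
  set γ := Real.eulerMascheroniConstant with hγdef
  have hH_lb : Real.log x + γ ≤ H x := by
    have := log_le_digamma_succ hx0
    rw [H]; linarith
  have hH_ub : H x ≤ Real.log x + 1/x + γ := by
    have h1 : digamma (x + 1) ≤ Real.log (x + 1) := digamma_le_log hx10
    have h2 : Real.log (x + 1) ≤ Real.log x + 1/x := by
      have h3 : Real.log (x + 1) = Real.log x + Real.log (1 + 1/x) := by
        rw [← Real.log_mul hx0.ne' (by positivity)]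
        congr 1; field_simp
      have h4 : Real.log (1 + 1/x) ≤ 1/x := by
        have := Real.log_le_sub_one_of_pos (show (0:ℝ) < 1 + 1/x by positivity)
        linarith
      linarith
    rw [H]; linarith
  set h := H x with hhdef
  have hh1 : (4.5 : ℝ) ≤ h := by linarith
  have hh0 : (0 : ℝ) < h := by linarith
  -- key: 1.4 * h^2 < x
  have hkey : 1.4 * h ^ 2 < x := by
    set u := Real.log x with hudef
    have hxu : x = Real.exp u := (Real.exp_log hx0).symm
    have hub : h ≤ u + 0.7 := by
      have : 1/x ≤ 1/54.5 := by
        apply one_div_le_one_div_of_le (by norm_num) hx54.le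
      linarith
    have hexpu : Real.exp u = Real.exp 4 * (Real.exp ((u-4)/2)) ^ 2 := by
      rw [← Real.exp_nat_mul]
      push_cast
      rw [← Real.exp_add]
      congr 1; ring
    have hs : 1 + (u - 4)/2 ≤ Real.exp ((u - 4)/2) := by
      have := Real.add_one_le_exp ((u-4)/2); linarith
    have hs0 : (0 : ℝ) ≤ 1 + (u - 4)/2 := by linarith
    have hcube : 54.5 * (1 + (u-4)/2) ^ 2 ≤ Real.exp u := by
      rw [hexpu]
      have h1 : (1 + (u-4)/2) ^ 2 ≤ (Real.exp ((u-4)/2)) ^ 2 := by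
        apply pow_le_pow_left₀ hs0 hs
      nlinarith [Real.exp_pos ((u-4)/2)]
    have hpoly : 1.4 * (u + 0.7) ^ 2 < 54.5 * (1 + (u-4)/2) ^ 2 := by
      nlinarith [sq_nonneg (u - 4)]
    have : 1.4 * h ^ 2 ≤ 1.4 * (u + 0.7) ^ 2 := by
      have : h ^ 2 ≤ (u + 0.7) ^ 2 := by nlinarith
      linarith
    rw [hxu]
    linarith
  -- derivative setup
  set p := deriv digamma (x + 1) with hpdef
  have hp : 1 / (x + 1) ≤ p := deriv_digamma_ge hx10
  have hH' : HasDerivAt H p x := by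
    have h1 : HasDerivAt (fun y : ℝ => y + 1) 1 x := (hasDerivAt_id x).add_const 1
    have h2 : HasDerivAt digamma p (x + 1) := (digamma_diff hx10).hasDerivAt
    have h3 := HasDerivAt.comp x h2 h1
    rw [mul_one] at h3
    exact h3.add_const γ
  set E := Real.exp h with hEdef
  set G := Real.log h with hGdef
  have hnum : HasDerivAt (fun x => H x + Real.exp (H x) * Real.log (H x))
      (p + ((E * p) * G + E * (p / h))) x := by
    exact hH'.add ((hH'.exp).mul (hH'.log hh0.ne'))
  have hL : HasDerivAt L (((p + ((E * p) * G + E * (p / h))) * x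
      - (h + E * G) * 1) / x ^ 2) x := by
    have := hnum.div (hasDerivAt_id x) hx0.ne'
    exact this
  rw [hL.deriv]
  apply div_pos _ (by positivity)
  -- final inequality
  have hG0 : (0 : ℝ) < G := Real.log_pos (by linarith)
  have hA : (0 : ℝ) < 1 + E * (G + 1/h) := by positivity
  have hEx : x ≤ E := by
    rw [hEdef]
    calc x = Real.exp (Real.log x) := (Real.exp_log hx0).symm
      _ ≤ Real.exp h := Real.exp_le_exp.mpr (by linarith)
  have hGle : G ≤ 0.37 * h := by
    have hpos : (0:ℝ) < h * Real.exp (-1) := by positivity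
    have h1 := Real.log_le_sub_one_of_pos hpos
    rw [Real.log_mul hh0.ne' (Real.exp_ne_zero _), Real.log_exp] at h1
    have h2 : Real.exp (-1 : ℝ) ≤ 0.37 := by
      rw [Real.exp_neg]
      rw [inv_le_comm₀ (Real.exp_pos 1) (by norm_num)]
      linarith
    rw [← hGdef] at h1
    have h3 : h * Real.exp (-1) ≤ h * 0.37 := mul_le_mul_of_nonneg_left h2 hh0.le
    linarith
  have hxG : 0 ≤ x / h - G := by
    have : 1.4 * h ≤ x / h := by
      rw [le_div_iff₀ hh0]; nlinarith [hkey]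
    linarith
  have hpx : x / (x + 1) ≤ p * x := by
    rw [div_le_iff₀ hx10]
    have := mul_le_mul_of_nonneg_right hp (le_of_lt (mul_pos hx0 hx10))
    calc x = 1 / (x+1) * (x * (x+1)) := by field_simp
      _ ≤ p * (x * (x+1)) := this
      _ = p * x * (x+1) := by ring
  have hQ : 0 < x - (x + 1) * h + E * (x / h - G) := by
    have h1 : x * (x / h - G) ≤ E * (x / h - G) := mul_le_mul_of_nonneg_right hEx hxG
    have h2 : 0 < x - (x + 1) * h + x * (x / h - G) := by
      have he : x - (x + 1) * h + x * (x / h - G)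
          = (x * h - (x + 1) * h ^ 2 + x ^ 2 - x * h * G) / h := by
        field_simp; ring
      rw [he]
      apply div_pos _ hh0
      have hm1 : x * h * G ≤ x * h * (0.37 * h) :=
        mul_le_mul_of_nonneg_left hGle (le_of_lt (mul_pos hx0 hh0))
      have hm2 : 1.4 * h ^ 2 * x < x * x := mul_lt_mul_of_pos_right hkey hx0
      have hm3 : 54.5 * h ^ 2 ≤ x * h ^ 2 :=
        mul_le_mul_of_nonneg_right hx54.le (sq_nonneg h)
      nlinarith [mul_pos hx0 hh0]
    linarith
  -- combine
  have hT : (p + ((E * p) * G + E * (p / h))) * x - (h + E * G) * 1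
      = (p * x) * (1 + E * (G + 1/h)) - (h + E * G) := by ring
  rw [hT]
  have hstep1 : x / (x + 1) * (1 + E * (G + 1/h)) - (h + E * G)
      ≤ (p * x) * (1 + E * (G + 1/h)) - (h + E * G) := by
    have := mul_le_mul_of_nonneg_right hpx hA.le
    linarith
  have hstep2 : x / (x + 1) * (1 + E * (G + 1/h)) - (h + E * G)
      = (x - (x + 1) * h + E * (x / h - G)) / (x + 1) := by
    field_simp; ring
  have := div_pos hQ hx10
  rw [hstep2] at hstep1
  linarith
end

section
/- For every real x ≥ 1, N(x) ≥ G(x), where G(x) := x/(x+1) − (1 + log x) + x/(1 + log x) − log(1 + log x). -/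
open Real

/-- `G(x) = x/(x+1) − (1 + log x) + x/(1 + log x) − log(1 + log x)`. -/
noncomputable def G (x : ℝ) : ℝ :=
  x / (x + 1) - (1 + Real.log x) + x / (1 + Real.log x) - Real.log (1 + Real.log x)

section Aux
open Filter Finset


noncomputable def S (y : ℝ) : ℝ := ∑' k : ℕ, 1 / (y + k) ^ 2
noncomputable def T (y : ℝ) : ℝ := ∑' k : ℕ, (1 / (k + 1 : ℝ) - 1 / (y + k))
noncomputable def psi (y : ℝ) : ℝ := -Real.eulerMascheroniConstant + T y

-- telescoping
lemma hasSum_tele {y : ℝ} (hy : 0 < y) :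
    HasSum (fun k : ℕ => 1 / (y + k) - 1 / (y + (k + 1))) (1 / y) := by
  have hpos : ∀ k : ℕ, (0:ℝ) < y + k := fun k => by positivity
  rw [hasSum_iff_tendsto_nat_of_nonneg]
  · have h1 : ∀ n : ℕ, ∑ i ∈ Finset.range n, (1 / (y + i) - 1 / (y + (i + 1)))
        = 1 / (y + (0:ℕ)) - 1 / (y + n) := by
      intro n
      have := Finset.sum_range_sub' (fun i : ℕ => 1 / (y + i)) n
      simpa using this
    simp only [h1]
    have hadd : Tendsto (fun n : ℕ => y + (n:ℝ)) atTop atTop :=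
      tendsto_atTop_add_const_left _ y tendsto_natCast_atTop_atTop
    have : Tendsto (fun n : ℕ => 1 / (y + (n:ℝ))) atTop (nhds 0) := by
      simpa [one_div, Function.comp_def] using (tendsto_inv_atTop_zero).comp hadd
    simpa using (tendsto_const_nhds.sub this)
  · intro k
    have h1 : (0:ℝ) < y + k := hpos k
    have h2 : y + (k:ℝ) ≤ y + ((k:ℝ) + 1) := by linarith
    have := one_div_le_one_div_of_le h1 h2
    linarith

lemma summable_one_div_succ_sq : Summable (fun k : ℕ => 1 / ((k:ℝ) + 1) ^ 2) := by
  have h := summable_one_div_nat_pow.mpr (by norm_num : 1 < 2)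
  have h2 := (summable_nat_add_iff 1).mpr h
  exact h2.congr (fun k => by push_cast; ring)

lemma summable_sq {y : ℝ} (hy : 0 < y) : Summable (fun k : ℕ => 1 / (y + k) ^ 2) := by
  rw [← summable_nat_add_iff 1]
  apply Summable.of_nonneg_of_le (fun k => by positivity) (fun k => ?_) summable_one_div_succ_sq
  apply div_le_div_of_nonneg_left one_pos.le (by positivity)
  have h0 : (0:ℝ) < (k:ℝ)+1 := by positivity
  push_cast
  nlinarith

lemma S_le {y : ℝ} (hy : 1 < y) : S y ≤ 1 / (y - 1) := by
  have h0 : (0:ℝ) < y - 1 := by linarith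
  have htele : HasSum (fun k : ℕ => 1 / (y - 1 + k) - 1 / (y - 1 + (k + 1))) (1 / (y-1)) :=
    hasSum_tele h0
  refine le_trans (Summable.tsum_le_tsum (fun k => ?_) (summable_sq (by linarith)) htele.summable) ?_
  · have h1 : (0:ℝ) < y - 1 + k := by positivity
    have h2 : (0:ℝ) < y - 1 + (k+1) := by positivity
    rw [div_sub_div _ _ h1.ne' h2.ne']
    have he : (1:ℝ) * (y - 1 + (k+1)) - (y - 1 + k) * 1 = 1 := by ring
    rw [he]
    have h3 : (0:ℝ) < y + k := by linarith
    apply div_le_div_of_nonneg_left one_pos.le (by positivity)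
    nlinarith
  · exact le_of_eq htele.tsum_eq

lemma le_S {y : ℝ} (hy : 0 < y) : 1 / y ≤ S y := by
  have htele := hasSum_tele hy
  rw [← htele.tsum_eq]
  refine Summable.tsum_le_tsum (fun k => ?_) htele.summable (summable_sq hy)
  have h1 : (0:ℝ) < y + k := by positivity
  have h2 : (0:ℝ) < y + (k+1) := by positivity
  rw [div_sub_div _ _ h1.ne' h2.ne']
  have he : (1:ℝ) * (y + (k+1)) - (y + k) * 1 = 1 := by ring
  rw [he]
  apply div_le_div_of_nonneg_left one_pos.le (by positivity)
  rw [sq]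
  exact mul_le_mul_of_nonneg_left (by linarith) h1.le

noncomputable def P (n : ℕ) (y : ℝ) : ℝ :=
  y * Real.log n + Real.log (n.factorial) - ∑ j ∈ range (n + 1), Real.log (y + j)
noncomputable def P' (n : ℕ) (y : ℝ) : ℝ := Real.log n - ∑ j ∈ range (n + 1), 1 / (y + j)

lemma hasDerivAt_P (n : ℕ) {y : ℝ} (hy : 0 < y) : HasDerivAt (P n) (P' n y) y := by
  have h1 : HasDerivAt (fun y : ℝ => y * Real.log n + Real.log (n.factorial)) (Real.log n) y := by
    simpa using ((hasDerivAt_id y).mul_const (Real.log n)).add_const (Real.log (n.factorial))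
  have h2 : HasDerivAt (fun y : ℝ => ∑ j ∈ range (n + 1), Real.log (y + j))
      (∑ j ∈ range (n + 1), 1 / (y + j)) y := by
    apply HasDerivAt.fun_sum
    intro j _
    have hpos : (0:ℝ) < y + j := by positivity
    simpa [one_div, Function.comp_def] using (Real.hasDerivAt_log hpos.ne').comp y ((hasDerivAt_id y).add_const (j:ℝ))
  exact h1.sub h2

lemma P_eq {n : ℕ} (hn : 1 ≤ n) {y : ℝ} (hy : 0 < y) :
    P n y = Real.log (Real.GammaSeq y n) := by
  have hn0 : (0:ℝ) < n := by exact_mod_cast hn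
  have hfact : (0:ℝ) < ((n.factorial : ℕ) : ℝ) := by exact_mod_cast Nat.factorial_pos n
  have hj : ∀ j ∈ range (n+1), y + (j:ℝ) ≠ 0 := fun j _ => by positivity
  have hprod : (0:ℝ) < ∏ j ∈ range (n+1), (y + j) :=
    Finset.prod_pos fun j _ => by positivity
  rw [Real.GammaSeq, Real.log_div (by positivity) hprod.ne',
    Real.log_mul (by positivity) hfact.ne', Real.log_rpow hn0,
    Real.log_prod hj, P]

lemma P_tendsto {y : ℝ} (hy : 0 < y) :
    Tendsto (fun n => P n y) atTop (nhds (Real.log (Real.Gamma y))) := by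
  have h := (Real.continuousAt_log (Real.Gamma_pos_of_pos hy).ne').tendsto.comp
    (Real.GammaSeq_tendsto_Gamma y)
  apply h.congr'
  filter_upwards [eventually_ge_atTop 1] with n hn
  exact (P_eq hn hy).symm

lemma tendsto_c : Tendsto (fun n : ℕ => Real.log n - (harmonic (n+1) : ℝ)) atTop
    (nhds (-Real.eulerMascheroniConstant)) := by
  have h1 := Real.tendsto_harmonic_sub_log
  have hadd : Tendsto (fun n : ℕ => (n:ℝ) + 1) atTop atTop :=
    tendsto_atTop_add_const_right _ 1 tendsto_natCast_atTop_atTop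
  have h2 : Tendsto (fun n : ℕ => ((n:ℝ) + 1)⁻¹) atTop (nhds 0) :=
    tendsto_inv_atTop_zero.comp hadd
  have h3 := h1.neg.sub h2
  rw [sub_zero] at h3
  apply h3.congr
  intro n
  rw [harmonic_succ]
  push_cast
  ring

lemma t_eq {y : ℝ} (hy : 0 < y) (k : ℕ) :
    1 / ((k:ℝ) + 1) - 1 / (y + k) = (y - 1) / (((k:ℝ) + 1) * (y + k)) := by
  have h1 : ((k:ℝ) + 1) ≠ 0 := by positivity
  have h2 : (y + (k:ℝ)) ≠ 0 := by positivity
  field_simp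
  ring

lemma unif_Q {b : ℝ} (hb : 1 < b) :
    TendstoUniformlyOn (fun n y => ∑ j ∈ range n, (1 / ((j:ℝ) + 1) - 1 / (y + j))) T atTop
      (Set.Ioo 1 b) := by
  apply tendstoUniformlyOn_tsum_nat (u := fun k => b / ((k:ℝ) + 1) ^ 2)
  · exact (summable_one_div_succ_sq.mul_left b).congr (fun k => by rw [mul_one_div])
  · intro k y hy
    obtain ⟨hy1, hyb⟩ := hy
    have hy0 : (0:ℝ) < y := by linarith
    rw [t_eq hy0, Real.norm_eq_abs, abs_div, abs_of_nonneg (by linarith),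
      abs_of_nonneg (by positivity)]
    apply div_le_div₀ (by positivity) (by linarith) (by positivity)
    have : ((k:ℝ) + 1) ≤ y + k := by linarith
    nlinarith [sq_nonneg ((k:ℝ)+1)]

lemma unif_const {c : ℕ → ℝ} {a : ℝ} (h : Tendsto c atTop (nhds a)) (s : Set ℝ) :
    TendstoUniformlyOn (fun n (_ : ℝ) => c n) (fun _ => a) atTop s := by
  rw [Metric.tendstoUniformlyOn_iff]
  intro ε hε
  filter_upwards [Metric.tendsto_nhds.mp h ε hε] with n hn y _
  rwa [dist_comm]

lemma P'_eq (n : ℕ) (y : ℝ) :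
    P' n y = (Real.log n - (harmonic (n+1) : ℝ)) +
      ∑ j ∈ range (n+1), (1 / ((j:ℝ) + 1) - 1 / (y + j)) := by
  rw [P', Finset.sum_sub_distrib]
  have : (harmonic (n+1) : ℝ) = ∑ j ∈ range (n+1), 1 / ((j:ℝ) + 1) := by
    rw [harmonic]
    push_cast
    simp [one_div]
  rw [this]
  ring

lemma unif_P' {b : ℝ} (hb : 1 < b) :
    TendstoUniformlyOn P' psi atTop (Set.Ioo 1 b) := by
  have hQ : TendstoUniformlyOn
      (fun n y => ∑ j ∈ range (n+1), (1 / ((j:ℝ) + 1) - 1 / (y + j))) T atTop (Set.Ioo 1 b) := by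
    intro u hu
    exact (tendsto_add_atTop_nat 1).eventually (unif_Q hb u hu)
  have hC := unif_const tendsto_c (Set.Ioo 1 b)
  have := hC.add hQ
  apply this.congr
  filter_upwards with n y _
  exact (P'_eq n y).symm

lemma hasDerivAt_logGamma {y : ℝ} (hy : 1 < y) :
    HasDerivAt (fun t : ℝ => Real.log (Real.Gamma t)) (psi y) y := by
  apply hasDerivAt_of_tendstoUniformlyOn (f := P) (isOpen_Ioo (a := (1:ℝ)) (b := y + 1))
    (unif_P' (by linarith)) ?_ ?_ (Set.mem_Ioo.mpr ⟨hy, lt_add_one y⟩)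
  · filter_upwards with n t ht
    exact hasDerivAt_P n (by linarith [ht.1])
  · intro t ht
    exact P_tendsto (by linarith [ht.1])

lemma hasDerivAt_t (k : ℕ) {y : ℝ} (hy : 0 < y) :
    HasDerivAt (fun y : ℝ => 1 / ((k:ℝ) + 1) - 1 / (y + k)) (1 / (y + k) ^ 2) y := by
  have hpos : (0:ℝ) < y + k := by positivity
  have h := (((hasDerivAt_id y).add_const (k:ℝ)).inv hpos.ne')
  have h2 := (hasDerivAt_const y (1 / ((k:ℝ) + 1))).sub h
  simpa [one_div, neg_div, Pi.sub_def, Pi.inv_def] using h2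

lemma summable_t {y : ℝ} (hy : 1 ≤ y) :
    Summable (fun k : ℕ => 1 / ((k:ℝ) + 1) - 1 / (y + k)) := by
  have h0 : (0:ℝ) < y := by linarith
  apply Summable.of_nonneg_of_le (fun k => ?_) (fun k => ?_)
    ((summable_one_div_succ_sq.mul_left (y-1)).congr (fun k => by rw [mul_one_div]))
  · rw [t_eq h0]
    exact div_nonneg (by linarith) (by positivity)
  · rw [t_eq h0]
    apply div_le_div₀ (by linarith) le_rfl (by positivity)
    have : ((k:ℝ) + 1) ≤ y + k := by linarith
    nlinarith [sq_nonneg ((k:ℝ)+1)]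

lemma unif_S {b : ℝ} (hb : 1 < b) :
    TendstoUniformlyOn (fun n y => ∑ j ∈ range n, 1 / (y + (j:ℝ)) ^ 2) S atTop
      (Set.Ioo 1 b) := by
  apply tendstoUniformlyOn_tsum_nat summable_one_div_succ_sq
  intro k y hy
  rw [Real.norm_eq_abs, abs_of_nonneg (by positivity)]
  apply div_le_div₀ one_pos.le le_rfl (by positivity)
  have h1 : ((k:ℝ) + 1) ≤ y + k := by linarith [hy.1]
  nlinarith [sq_nonneg ((k:ℝ)+1)]

lemma hasDerivAt_T {y : ℝ} (hy : 1 < y) : HasDerivAt T (S y) y := by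
  apply hasDerivAt_of_tendstoUniformlyOn
    (f := fun n y => ∑ j ∈ range n, (1 / ((j:ℝ) + 1) - 1 / (y + j)))
    (isOpen_Ioo (a := (1:ℝ)) (b := y + 1)) (unif_S (by linarith)) ?_ ?_
    (Set.mem_Ioo.mpr ⟨hy, lt_add_one y⟩)
  · filter_upwards with n t ht
    exact HasDerivAt.fun_sum fun j _ => hasDerivAt_t j (by linarith [ht.1])
  · intro t ht
    exact (summable_t (le_of_lt ht.1)).hasSum.tendsto_sum_nat

lemma hasDerivAt_psi {y : ℝ} (hy : 1 < y) : HasDerivAt psi (S y) y := by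
  exact (hasDerivAt_T hy).const_add (-Real.eulerMascheroniConstant)

lemma psi_two : psi 2 = 1 - Real.eulerMascheroniConstant := by
  have h : HasSum (fun k : ℕ => 1 / (1 + (k:ℝ)) - 1 / (1 + ((k:ℝ) + 1))) (1 / 1) :=
    hasSum_tele one_pos
  have he : (fun k : ℕ => 1 / (1 + (k:ℝ)) - 1 / (1 + ((k:ℝ) + 1)))
      = fun k : ℕ => 1 / ((k:ℝ) + 1) - 1 / (2 + (k:ℝ)) := by
    funext k; ring_nf
  rw [he] at h
  have hT : T 2 = 1 := by
    rw [T]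
    norm_num at h ⊢
    exact h.tsum_eq
  rw [psi, hT]
  ring

lemma digamma_eq {y : ℝ} (hy : 1 < y) : digamma y = psi y := (hasDerivAt_logGamma hy).deriv

lemma hasDerivAt_H {x : ℝ} (hx : 0 < x) : HasDerivAt H (S (x + 1)) x := by
  have h1 : HasDerivAt (fun t : ℝ => psi (t + 1) + Real.eulerMascheroniConstant) (S (x + 1)) x := by
    have := (hasDerivAt_psi (show (1:ℝ) < x + 1 by linarith)).comp x
      ((hasDerivAt_id x).add_const 1)
    simpa using this.add_const Real.eulerMascheroniConstant
  apply h1.congr_of_eventuallyEq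
  filter_upwards [eventually_gt_nhds hx] with t ht
  rw [H, digamma_eq (by linarith)]

lemma H_one : H 1 = 1 := by
  have : (1:ℝ) + 1 = 2 := by norm_num
  rw [H, this, digamma_eq one_lt_two, psi_two]
  ring

lemma H_le {x : ℝ} (hx : 1 ≤ x) : H x ≤ 1 + Real.log x := by
  have hmono : AntitoneOn (fun t => H t - Real.log t) (Set.Ici 1) := by
    apply antitoneOn_of_deriv_nonpos (convex_Ici 1)
    · intro t ht
      have ht0 : (0:ℝ) < t := lt_of_lt_of_le one_pos ht
      exact ((hasDerivAt_H ht0).sub (Real.hasDerivAt_log ht0.ne')).continuousAt.continuousWithinAt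
    · intro t ht
      rw [interior_Ici] at ht
      have ht0 : (0:ℝ) < t := by have := ht; simp at this; linarith
      exact ((hasDerivAt_H ht0).sub
        (Real.hasDerivAt_log ht0.ne')).differentiableAt.differentiableWithinAt
    · intro t ht
      rw [interior_Ici] at ht
      have ht1 : (1:ℝ) < t := ht
      have ht0 : (0:ℝ) < t := by linarith
      rw [HasDerivAt.deriv (f := fun t => H t - Real.log t) ((hasDerivAt_H ht0).sub (Real.hasDerivAt_log ht0.ne'))]
      have hS := S_le (show (1:ℝ) < t + 1 by linarith)
      have he : t + 1 - 1 = t := by ring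
      rw [he] at hS
      have : 1 / t = t⁻¹ := one_div t
      linarith [hS, this.le]
  have h2 := hmono (Set.mem_Ici.mpr le_rfl) (Set.mem_Ici.mpr hx) hx
  simp only [H_one, Real.log_one, sub_zero] at h2
  linarith

lemma H_ge {x : ℝ} (hx : 1 ≤ x) : 1 + Real.log (x + 1) - Real.log 2 ≤ H x := by
  have hmono : MonotoneOn (fun t => H t - Real.log (t + 1)) (Set.Ici 1) := by
    apply monotoneOn_of_deriv_nonneg (convex_Ici 1)
    · intro t ht
      have ht0 : (0:ℝ) < t := lt_of_lt_of_le one_pos ht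
      have h1 : (0:ℝ) < t + 1 := by linarith
      have hlog : HasDerivAt (fun u : ℝ => Real.log (u + 1)) ((t + 1)⁻¹) t := by
        simpa [Function.comp_def] using (Real.hasDerivAt_log h1.ne').comp t ((hasDerivAt_id t).add_const 1)
      exact ((hasDerivAt_H ht0).sub hlog).continuousAt.continuousWithinAt
    · intro t ht
      rw [interior_Ici] at ht
      have ht1 : (1:ℝ) < t := ht
      have ht0 : (0:ℝ) < t := by linarith
      have h1 : (0:ℝ) < t + 1 := by linarith
      have hlog : HasDerivAt (fun u : ℝ => Real.log (u + 1)) ((t + 1)⁻¹) t := by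
        simpa [Function.comp_def] using (Real.hasDerivAt_log h1.ne').comp t ((hasDerivAt_id t).add_const 1)
      exact ((hasDerivAt_H ht0).sub hlog).differentiableAt.differentiableWithinAt
    · intro t ht
      rw [interior_Ici] at ht
      have ht1 : (1:ℝ) < t := ht
      have ht0 : (0:ℝ) < t := by linarith
      have h1 : (0:ℝ) < t + 1 := by linarith
      have hlog : HasDerivAt (fun u : ℝ => Real.log (u + 1)) ((t + 1)⁻¹) t := by
        simpa [Function.comp_def] using (Real.hasDerivAt_log h1.ne').comp t ((hasDerivAt_id t).add_const 1)
      rw [HasDerivAt.deriv (f := fun t => H t - Real.log (t + 1)) ((hasDerivAt_H ht0).sub hlog)]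
      have hS := le_S (show (0:ℝ) < t + 1 by linarith)
      simp only [one_div] at hS ⊢
      linarith
  have h2 := hmono (Set.mem_Ici.mpr le_rfl) (Set.mem_Ici.mpr hx) hx
  simp only [H_one] at h2
  have : (1:ℝ) + 1 = 2 := by norm_num
  rw [this] at h2
  linarith

lemma key_K {x : ℝ} (hx : 1 ≤ x) :
    (1 + Real.log x) * Real.log (1 + Real.log x) ≤ x := by
  set t := Real.log x with hts
  have ht : 0 ≤ t := Real.log_nonneg hx
  have hu : (0:ℝ) < 1 + t := by linarith
  have hlog : Real.log (1 + t) ≤ t := by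
    have := Real.log_le_sub_one_of_pos hu
    linarith
  have h1 : (1 + t) * Real.log (1 + t) ≤ (1 + t) * t :=
    mul_le_mul_of_nonneg_left hlog (by linarith)
  have hcubic : 1 + t + t^2/2 + t^3/6 ≤ Real.exp t := by
    have h := Real.sum_le_exp_of_nonneg ht 4
    have he : ∑ i ∈ Finset.range 4, t ^ i / (Nat.factorial i : ℝ)
        = 1 + t + t^2/2 + t^3/6 := by
      norm_num [Finset.sum_range_succ, Nat.factorial]
      try ring
    rwa [he] at h
  have hx' : Real.exp t = x := by
    rw [hts, Real.exp_log (by linarith)]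
  nlinarith [mul_nonneg (mul_nonneg (sq_nonneg (t - 2)) ht) ht, sq_nonneg (t-2)]

theorem N_ge_G' (x : ℝ) (hx : 1 ≤ x) :
    x / (x + 1) - (1 + Real.log x) + x / (1 + Real.log x) - Real.log (1 + Real.log x)
      ≤ x * deriv H x - H x +
        Real.exp (H x) * ((x * deriv H x - 1) * Real.log (H x) + x * deriv H x / H x) := by
  have hx0 : (0:ℝ) < x := by linarith
  set u := 1 + Real.log x with hu_def
  set h := H x with hh_def
  set D := deriv H x with hD_def
  have hu1 : (1:ℝ) ≤ u := by
    have := Real.log_nonneg hx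
    simp only [hu_def]; linarith
  have hu0 : (0:ℝ) < u := by linarith
  -- derivative value and bounds
  have hD_eq : D = S (x + 1) := (hasDerivAt_H hx0).deriv ▸ rfl
  have hD_lo : 1 / (x + 1) ≤ D := by rw [hD_eq]; exact le_S (by linarith)
  have hD_hi : D ≤ 1 / x := by
    have := S_le (show (1:ℝ) < x + 1 by linarith)
    rw [hD_eq]
    have he : x + 1 - 1 = x := by ring
    rwa [he] at this
  set d := x * D with hd_def
  have hd_lo : x / (x + 1) ≤ d := by
    rw [hd_def, div_eq_mul_one_div]
    exact mul_le_mul_of_nonneg_left hD_lo hx0.le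
  have hd_hi : d ≤ 1 := by
    have := mul_le_mul_of_nonneg_left hD_hi hx0.le
    rw [hd_def]
    calc x * D ≤ x * (1/x) := this
    _ = 1 := by field_simp
  -- H bounds
  have hh_u : h ≤ u := H_le hx
  have hh_l : 1 + Real.log (x+1) - Real.log 2 ≤ h := H_ge hx
  have hl1 : (1:ℝ) ≤ 1 + Real.log (x+1) - Real.log 2 := by
    have : Real.log 2 ≤ Real.log (x+1) := Real.log_le_log two_pos (by linarith)
    linarith
  have hh1 : (1:ℝ) ≤ h := le_trans hl1 hh_l
  have hh0 : (0:ℝ) < h := by linarith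
  have hlogh0 : 0 ≤ Real.log h := Real.log_nonneg hh1
  have hloghu : Real.log h ≤ Real.log u := Real.log_le_log hh0 hh_u
  have hlogu0 : 0 ≤ Real.log u := Real.log_nonneg hu1
  have hK : Real.log u ≤ x / u := by
    have hk := key_K hx
    rw [le_div_iff₀ hu0]
    nlinarith [hk]
  set B := (d - 1) * Real.log h + d / h with hB_def
  have hd0 : 0 ≤ d := le_trans (by positivity) hd_lo
  have hBl : (x / u - Real.log u) / (x + 1) ≤ B := by
    have h1 : (1 - d) * Real.log h ≤ (1 / (x + 1)) * Real.log u := by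
      apply mul_le_mul ?_ hloghu hlogh0 (by positivity)
      have hxx : 1 - x / (x + 1) = 1 / (x + 1) := by field_simp; ring
      linarith
    have h2 : (x / (x + 1)) / u ≤ d / h := by
      calc (x / (x + 1)) / u ≤ d / u := (div_le_div_iff_of_pos_right hu0).mpr hd_lo
        _ ≤ d / h := div_le_div_of_nonneg_left hd0 hh0 hh_u
    have hident : -((1 / (x + 1)) * Real.log u) + (x / (x + 1)) / u
        = (x / u - Real.log u) / (x + 1) := by
      field_simp
      ring
    nlinarith [h1, h2, hident]
  have hB0 : 0 ≤ B := le_trans (div_nonneg (by linarith) (by linarith)) hBl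
  have hexp_l : Real.exp 1 * (x + 1) / 2 ≤ Real.exp h := by
    have hle := Real.exp_le_exp.mpr hh_l
    have he : Real.exp (1 + Real.log (x + 1) - Real.log 2) = Real.exp 1 * (x + 1) / 2 := by
      rw [Real.exp_sub, Real.exp_add, Real.exp_log (by linarith : (0:ℝ) < x + 1),
        Real.exp_log two_pos]
    rwa [he] at hle
  have hmain : Real.exp 1 / 2 * (x / u - Real.log u) ≤ Real.exp h * B := by
    have c1 : Real.exp 1 / 2 * (x / u - Real.log u)
        = (Real.exp 1 * (x + 1) / 2) * ((x / u - Real.log u) / (x + 1)) := by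
      field_simp
    rw [c1]
    calc (Real.exp 1 * (x + 1) / 2) * ((x / u - Real.log u) / (x + 1))
        ≤ (Real.exp 1 * (x + 1) / 2) * B := by
          apply mul_le_mul_of_nonneg_left hBl (by positivity)
      _ ≤ Real.exp h * B := mul_le_mul_of_nonneg_right hexp_l hB0
  have he2 : (2:ℝ) ≤ Real.exp 1 := by
    have := Real.add_one_le_exp 1
    linarith
  have hKB : x / u - Real.log u ≤ Real.exp 1 / 2 * (x / u - Real.log u) := by
    nlinarith [he2, hK]
  linarith [hmain, hd_lo, hh_u, hKB]


end Aux

theorem N_ge_G (x : ℝ) (hx : 1 ≤ x) : G x ≤ N x := by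
  simp only [G, N]
  exact N_ge_G' x hx
end

section
/- For every real x ≥ e^4, G(x) > x/(x+1) > 0, where G(x) := x/(x+1) − (1 + log x) + x/(1 + log x) − log(1 + log x). -/
/-!
Put `L = 1 + log x ≥ 5`. Then `G x - x/(x+1) = x/L - L - log L`, so it suffices that
`L² + L log L < x = exp (L - 1)`. The tangent line of `log` at `e` gives `log L ≤ L/e < L/2`,
which reduces this to `3/2 (1 + y)² < exp y` for `y = log x ≥ 4`, and that follows from the
degree-five Taylor polynomial of `exp`.
-/

open Real

namespace Real

theorem log_le_div_exp_one {t : ℝ} (ht : 0 < t) : log t ≤ t / exp 1 := by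
  have h := log_le_sub_one_of_pos (div_pos ht (exp_pos 1))
  rwa [log_div ht.ne' (exp_ne_zero 1), log_exp, sub_le_sub_iff_right] at h

theorem log_lt_half_self {t : ℝ} (ht : 0 < t) : log t < t / 2 :=
  (log_le_div_exp_one ht).trans_lt (div_lt_div_of_pos_left ht two_pos exp_one_gt_two)

theorem three_halves_mul_one_add_sq_lt_exp {y : ℝ} (hy : 4 ≤ y) :
    3 / 2 * (1 + y) ^ 2 < exp y := by
  have taylor : ∑ i ∈ Finset.range 6, y ^ i / i.factorial ≤ exp y :=
    sum_le_exp_of_nonneg (by linarith) 6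
  norm_num [Finset.sum_range_succ, Nat.factorial] at taylor
  nlinarith [pow_le_pow_left₀ (by norm_num : (0 : ℝ) ≤ 4) hy 3]

end Real

theorem G_sub_self_div_add_one (x : ℝ) :
    G x - x / (x + 1) = x / (1 + log x) - (1 + log x) - log (1 + log x) := by
  unfold G
  ring

theorem G_gt (x : ℝ) (hx : Real.exp 4 ≤ x) :
    x / (x + 1) < G x ∧ 0 < x / (x + 1) := by
  have hx0 : 0 < x := (exp_pos 4).trans_le hx
  have hy : 4 ≤ log x := by simpa using log_le_log (exp_pos 4) hx
  set L := 1 + log x with hL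
  have hL0 : 0 < L := by linarith
  have hexp := three_halves_mul_one_add_sq_lt_exp hy
  rw [exp_log hx0, ← hL] at hexp
  have key : L + log L < x / L := by
    rw [lt_div_iff₀ hL0]
    calc (L + log L) * L < (L + L / 2) * L := by gcongr; exact log_lt_half_self hL0
      _ = 3 / 2 * L ^ 2 := by ring
      _ < x := hexp
  refine ⟨?_, by positivity⟩
  linarith [G_sub_self_div_add_one x]
end

section
/- For every real x ≥ e^4, N(x) > 0. -/
open Real

open Real Set Filter Topology

namespace Aux

lemma gamma_diff {y : ℝ} (hy : 0 < y) : DifferentiableAt ℝ Real.Gamma y :=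
  Real.differentiableAt_Gamma fun m => ((neg_nonpos.mpr m.cast_nonneg).trans_lt hy).ne'

lemma logGamma_diff {y : ℝ} (hy : 0 < y) :
    DifferentiableAt ℝ (fun t : ℝ => Real.log (Real.Gamma t)) y :=
  (gamma_diff hy).log (Real.Gamma_pos_of_pos hy).ne'

lemma digamma_eq {y : ℝ} (hy : 0 < y) :
    digamma y = deriv Real.Gamma y / Real.Gamma y := by
  unfold digamma
  rw [deriv.log (gamma_diff hy) (Real.Gamma_pos_of_pos hy).ne']

lemma analytic_gamma : AnalyticOnNhd ℝ Real.Gamma (Ioi 0) := by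
  intro x hx
  have hopen : IsOpen {z : ℂ | 0 < z.re} := isOpen_lt continuous_const Complex.continuous_re
  have hdo : DifferentiableOn ℂ Complex.Gamma {z : ℂ | 0 < z.re} := by
    intro z hz
    refine (Complex.differentiableAt_Gamma z fun m => ?_).differentiableWithinAt
    intro hzm
    rw [hzm] at hz
    simp only [mem_setOf_eq, Complex.neg_re, Complex.natCast_re] at hz
    have := m.cast_nonneg (α := ℝ)
    linarith
  have hC : AnalyticAt ℂ Complex.Gamma ((x : ℝ) : ℂ) := by
    refine hdo.analyticAt (hopen.mem_nhds ?_)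
    simpa using hx
  have h1 : AnalyticAt ℝ (Complex.Gamma ∘ (Complex.ofRealCLM : ℝ →L[ℝ] ℂ)) x :=
    hC.restrictScalars.comp (Complex.ofRealCLM.analyticAt x)
  have h2 : AnalyticAt ℝ ((Complex.reCLM : ℂ →L[ℝ] ℝ) ∘
      (Complex.Gamma ∘ (Complex.ofRealCLM : ℝ →L[ℝ] ℂ))) x :=
    (Complex.reCLM.analyticAt _).comp h1
  have : ((Complex.reCLM : ℂ →L[ℝ] ℝ) ∘
      (Complex.Gamma ∘ (Complex.ofRealCLM : ℝ →L[ℝ] ℂ))) = Real.Gamma := by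
    funext t
    simp [Function.comp, Complex.Gamma_ofReal]
  rwa [this] at h2

lemma analytic_digamma : AnalyticOnNhd ℝ digamma (Ioi 0) := by
  have hq : AnalyticOnNhd ℝ (fun y => deriv Real.Gamma y / Real.Gamma y) (Ioi 0) :=
    analytic_gamma.deriv.div analytic_gamma fun y hy => (Real.Gamma_pos_of_pos hy).ne'
  exact (hq.congr isOpen_Ioi fun y hy => (digamma_eq hy).symm)

lemma digamma_diff {y : ℝ} (hy : 0 < y) : DifferentiableAt ℝ digamma y :=
  (analytic_digamma y hy).differentiableAt

lemma digamma_rec {y : ℝ} (hy : 0 < y) : digamma (y + 1) = digamma y + 1 / y := by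
  unfold digamma
  rw [← deriv_comp_add_const, one_div, ← Real.deriv_log,
    ← deriv_fun_add (logGamma_diff hy) (Real.differentiableAt_log hy.ne')]
  apply Filter.EventuallyEq.deriv_eq
  filter_upwards [eventually_gt_nhds hy] with t ht
  rw [Real.Gamma_add_one ht.ne', Real.log_mul ht.ne' (Real.Gamma_pos_of_pos ht).ne', add_comm]

lemma digamma_mono {a b : ℝ} (ha : 0 < a) (hab : a < b) : digamma a ≤ digamma b := by
  have hc := Real.convexOn_log_Gamma
  have hb : 0 < b := ha.trans hab
  have h1 : digamma a ≤ slope (Real.log ∘ Real.Gamma) a b := by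
    have := hc.deriv_le_slope (mem_Ioi.mpr ha) (mem_Ioi.mpr hb) hab
      (by simpa [Function.comp_def] using logGamma_diff ha)
    simpa [Function.comp_def, digamma] using this
  have h2 : slope (Real.log ∘ Real.Gamma) a b ≤ digamma b := by
    have := hc.slope_le_deriv (mem_Ioi.mpr ha) (mem_Ioi.mpr hb) hab
      (by simpa [Function.comp_def] using logGamma_diff hb)
    simpa [Function.comp_def, digamma] using this
  linarith

lemma trigamma_nonneg {y : ℝ} (hy : 0 < y) : 0 ≤ deriv digamma y := by
  have hd : HasDerivAt digamma (deriv digamma y) y := (digamma_diff hy).hasDerivAt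
  have hslope : Tendsto (slope digamma y) (𝓝[>] y) (𝓝 (deriv digamma y)) :=
    (hasDerivAt_iff_tendsto_slope.mp hd).mono_left
      (nhdsWithin_mono _ fun z hz => ne_of_gt hz)
  refine ge_of_tendsto hslope ?_
  filter_upwards [self_mem_nhdsWithin] with z hz
  have hzy : y < z := hz
  have : digamma y ≤ digamma z := digamma_mono hy hzy
  rw [slope_def_field]
  apply div_nonneg (by linarith) (by linarith)

lemma trigamma_rec {y : ℝ} (hy : 0 < y) :
    deriv digamma (y + 1) = deriv digamma y - (y ^ 2)⁻¹ := by
  have h1 : deriv (fun t => digamma (t + 1)) y = deriv (fun t => digamma t + t⁻¹) y := by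
    apply Filter.EventuallyEq.deriv_eq
    filter_upwards [eventually_gt_nhds hy] with t ht
    rw [digamma_rec ht, one_div]
  rw [deriv_comp_add_const] at h1
  rw [h1, deriv_fun_add (digamma_diff hy) (differentiableAt_inv hy.ne'), deriv_inv]
  ring

lemma trigamma_ge {x : ℝ} (hx : 0 < x) : (x + 1)⁻¹ ≤ deriv digamma (x + 1) := by
  have key : ∀ n : ℕ, (x + 1)⁻¹ - (x + 1 + n)⁻¹ ≤ deriv digamma (x + 1) := by
    intro n
    have main : ∀ n : ℕ,
        (x + 1)⁻¹ - (x + 1 + n)⁻¹ + deriv digamma (x + 1 + n) ≤ deriv digamma (x + 1) := by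
      intro n
      induction n with
      | zero => simp
      | succ n ih =>
        have hpos : (0 : ℝ) < x + 1 + n := by positivity
        have hrec := trigamma_rec hpos
        have hstep : (x + 1 + n)⁻¹ - (x + 1 + (n + 1))⁻¹ ≤ ((x + 1 + n) ^ 2)⁻¹ := by
          have h2 : (0 : ℝ) < x + 1 + (n + 1) := by positivity
          have e : (x + 1 + (n:ℝ))⁻¹ - (x + 1 + ((n:ℝ) + 1))⁻¹
              = ((x + 1 + n) * (x + 1 + (n + 1)))⁻¹ := by
            rw [inv_sub_inv hpos.ne' h2.ne']
            congr 1
            ring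
          rw [e]
          apply inv_anti₀ (by positivity)
          nlinarith
        have : x + 1 + (n : ℝ) + 1 = x + 1 + ((n : ℝ) + 1) := by ring
        rw [this] at hrec
        push_cast
        nlinarith [hrec, ih, hstep]
    have h0 : 0 ≤ deriv digamma (x + 1 + n) := trigamma_nonneg (by positivity)
    linarith [main n]
  have hlim : Tendsto (fun n : ℕ => (x + 1)⁻¹ - (x + 1 + n)⁻¹) atTop (𝓝 ((x + 1)⁻¹)) := by
    have h1 : Tendsto (fun n : ℕ => (x + 1 + (n : ℝ))⁻¹) atTop (𝓝 0) :=
      tendsto_inv_atTop_zero.comp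
        (tendsto_atTop_add_const_left _ _ tendsto_natCast_atTop_atTop)
    simpa using tendsto_const_nhds.sub h1
  exact le_of_tendsto hlim (Filter.Eventually.of_forall key)

lemma digamma_lb {x : ℝ} (hx : 0 < x) : Real.log x ≤ digamma (x + 1) := by
  have hc := Real.convexOn_log_Gamma
  have h := hc.slope_le_deriv (mem_Ioi.mpr hx) (mem_Ioi.mpr (by linarith : (0:ℝ) < x + 1))
    (by linarith) (by simpa [Function.comp_def] using logGamma_diff (by linarith : (0:ℝ) < x + 1))
  rw [slope_def_field] at h
  have hval : (Real.log ∘ Real.Gamma) (x + 1) - (Real.log ∘ Real.Gamma) x = Real.log x := by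
    simp only [Function.comp_apply, Real.Gamma_add_one hx.ne',
      Real.log_mul hx.ne' (Real.Gamma_pos_of_pos hx).ne']
    ring
  rw [hval, show x + 1 - x = (1:ℝ) by ring, div_one] at h
  simpa [Function.comp_def, digamma] using h

lemma digamma_ub {x : ℝ} (hx : 0 < x) : digamma (x + 1) ≤ Real.log (x + 1) := by
  have hc := Real.convexOn_log_Gamma
  have hx1 : (0:ℝ) < x + 1 := by linarith
  have h := hc.deriv_le_slope (mem_Ioi.mpr hx1) (mem_Ioi.mpr (by linarith : (0:ℝ) < x + 2))
    (by linarith) (by simpa [Function.comp_def] using logGamma_diff hx1)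
  rw [slope_def_field] at h
  have hval : (Real.log ∘ Real.Gamma) (x + 2) - (Real.log ∘ Real.Gamma) (x + 1)
      = Real.log (x + 1) := by
    have : x + 2 = (x + 1) + 1 := by ring
    simp only [Function.comp_apply, this, Real.Gamma_add_one hx1.ne',
      Real.log_mul hx1.ne' (Real.Gamma_pos_of_pos hx1).ne']
    ring
  rw [hval, show x + 2 - (x + 1) = (1:ℝ) by ring, div_one] at h
  simpa [Function.comp_def, digamma] using h

lemma final_step {x h g l t : ℝ} (hx0 : 0 < x) (hhpos : 0 < h) (hgpos : 0 < g)
    (hlpos : 0 < l) (ht : x ≤ t * (x+1)) (hS : (x+1) * h^2 + g*l*h < x * g) :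
    0 < t*h - h*h + g*((t-1)*l*h + t) := by
  have hx1 : (0:ℝ) < x + 1 := by linarith
  have hcoef : (0:ℝ) ≤ h + g*l*h + g := by
    have := mul_pos (mul_pos hgpos hlpos) hhpos
    linarith
  nlinarith [mul_nonneg (sub_nonneg.mpr ht) hcoef, hS, mul_pos hx0 hhpos]

end Aux

set_option maxHeartbeats 1000000 in
theorem N_pos (x : ℝ) (hx : Real.exp 4 ≤ x) : 0 < N x := by
  have hx0 : 0 < x := lt_of_lt_of_le (Real.exp_pos 4) hx
  have hx1 : (0:ℝ) < x + 1 := by linarith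
  have hlogx : (4:ℝ) ≤ Real.log x := by
    rw [← Real.log_exp 4]
    exact Real.log_le_log (Real.exp_pos 4) hx
  have hγ1 : 1/2 < Real.eulerMascheroniConstant := Real.one_half_lt_eulerMascheroniConstant
  have hγ2 : Real.eulerMascheroniConstant < 2/3 := Real.eulerMascheroniConstant_lt_two_thirds
  have hderiv : deriv H x = deriv digamma (x + 1) := by
    unfold H
    rw [deriv_add_const, deriv_comp_add_const]
  unfold N
  rw [hderiv]
  set γ' := Real.eulerMascheroniConstant with hγdef
  set h := H x with hh
  have hhe : h = digamma (x+1) + γ' := rfl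
  clear_value h γ'
  have hlb : Real.log x + γ' ≤ h := by rw [hhe]; linarith [Aux.digamma_lb hx0]
  have hub : h ≤ Real.log (x+1) + γ' := by rw [hhe]; linarith [Aux.digamma_ub hx0]
  have hh1 : (4:ℝ) < h := by linarith
  have hhpos : (0:ℝ) < h := by linarith
  have hℓpos : 0 < Real.log h := Real.log_pos (by linarith)
  set u := Real.log (x+1) + γ' with hu
  clear_value u
  have hhu : h ≤ u := hub
  have hupos : 0 < u := lt_of_lt_of_le hhpos hhu
  have hlogh_le : Real.log h ≤ Real.log u := Real.log_le_log hhpos hhu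
  have hlogu_le : Real.log u ≤ u := by linarith [Real.log_le_sub_one_of_pos hupos]
  set g := Real.exp h with hg
  have hgpos : 0 < g := Real.exp_pos h
  set G := Real.exp γ' with hG
  have hGpos : 0 < G := Real.exp_pos _
  clear_value g G
  have hg_lb : x * G ≤ g := by
    rw [hg, hG]
    calc x * Real.exp γ' = Real.exp (Real.log x + γ') := by
          rw [Real.exp_add, Real.exp_log hx0]
    _ ≤ Real.exp h := Real.exp_le_exp.mpr hlb
  have hg_ub : g ≤ (x+1) * G := by
    rw [hg, hG]
    have hub' : h ≤ Real.log (x+1) + γ' := by rw [← hu]; exact hub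
    calc Real.exp h ≤ Real.exp (Real.log (x+1) + γ') := Real.exp_le_exp.mpr hub'
    _ = (x+1) * Real.exp γ' := by rw [Real.exp_add, Real.exp_log hx1]
  set d := deriv digamma (x+1) with hd
  have hd_lb : (x+1)⁻¹ ≤ d := Aux.trigamma_ge hx0
  clear_value d
  have hdpos : 0 < d := lt_of_lt_of_le (by positivity) hd_lb
  set t := x * d with htdef
  clear_value t
  have ht : x ≤ t * (x + 1) := by
    have h1 : x * (x+1)⁻¹ ≤ t := by
      rw [htdef]; exact mul_le_mul_of_nonneg_left hd_lb hx0.le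
    calc x = x * (x+1)⁻¹ * (x+1) := by field_simp
    _ ≤ t * (x+1) := mul_le_mul_of_nonneg_right h1 hx1.le
  -- numeric bound on G
  have hG1 : (1.6487:ℝ) ≤ G := by
    have h1 : Real.exp (1/2) ≤ G := by rw [hG]; exact Real.exp_le_exp.mpr hγ1.le
    have hsq : Real.exp (1/2) * Real.exp (1/2) = Real.exp 1 := by
      rw [← Real.exp_add]; norm_num
    nlinarith [Real.exp_pos (1/2), Real.exp_one_gt_d9]
  -- the square root substitution
  set s := Real.sqrt (Real.sqrt (x+1)) with hsdef
  clear_value s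
  have hs4 : s^4 = x + 1 := by
    rw [hsdef, show (4:ℕ) = 2*2 from rfl, pow_mul,
      Real.sq_sqrt (Real.sqrt_nonneg _), Real.sq_sqrt hx1.le]
  have hspos : 0 < s := by
    rw [hsdef]
    exact Real.sqrt_pos.mpr (Real.sqrt_pos.mpr hx1)
  have hse : (2.7182818:ℝ) < s := by
    by_contra hcon
    push_neg at hcon
    have hpow : s^4 ≤ (2.7182818:ℝ)^4 := pow_le_pow_left₀ hspos.le hcon 4
    have h4 : Real.exp 4 = Real.exp 1 ^ 4 := by
      rw [← Real.exp_nat_mul]; norm_num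
    have hE : (2.7182818:ℝ)^4 < Real.exp 1 ^ 4 :=
      pow_lt_pow_left₀ (by linarith [Real.exp_one_gt_d9]) (by norm_num) (by norm_num)
    rw [hs4] at hpow
    rw [h4] at hx
    linarith
  have hlogs : Real.log s ≤ s / Real.exp 1 := by
    have h0 : 0 < s / Real.exp 1 := by positivity
    have h1 := Real.log_le_sub_one_of_pos h0
    rw [Real.log_div hspos.ne' (Real.exp_ne_zero 1), Real.log_exp] at h1
    linarith
  have hlogx1 : Real.log (x+1) ≤ 1.471518 * s := by
    have h1 : Real.log (x+1) = 4 * Real.log s := by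
      rw [← hs4, Real.log_pow]; push_cast; ring
    have h2 : s / Real.exp 1 ≤ s / 2.7182818 := by
      apply div_le_div_of_nonneg_left hspos.le (by norm_num)
      linarith [Real.exp_one_gt_d9]
    have h3 : s / 2.7182818 ≤ 0.3678795 * s := by
      rw [div_eq_mul_inv]
      nlinarith [hspos.le]
    linarith
  have hub_u : u ≤ 1.471518 * s + 2/3 := by rw [hu]; linarith
  have key1 : 1.607 * u^2 < x - 1 := by
    have hx2 : x - 1 = s^4 - 2 := by linarith [hs4]
    have husq : u^2 ≤ (1.471518 * s + 2/3)^2 := by nlinarith [hub_u, hupos.le]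
    rw [hx2]
    nlinarith [hse, husq, hspos, sq_nonneg (s*s - 7), sq_nonneg (s - 2.7182818),
      mul_pos hspos hspos]
  have key2 : (x+1) * (u*u) + (x+1) * (G * (u * Real.log u)) < G * (x*x) := by
    have h1 : u * Real.log u ≤ u * u := mul_le_mul_of_nonneg_left hlogu_le hupos.le
    have h2 : (1 + G) * u^2 ≤ G * (1.607 * u^2) := by nlinarith [sq_nonneg u, hG1]
    have h3 : G * (1.607 * u^2) < G * (x-1) := mul_lt_mul_of_pos_left key1 hGpos
    have h4 : (x+1) * ((1+G)*u^2) < (x+1) * (G*(x-1)) :=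
      mul_lt_mul_of_pos_left (lt_of_le_of_lt h2 h3) hx1
    have h5 : (x+1)*(G*(u*Real.log u)) ≤ (x+1)*(G*(u*u)) :=
      mul_le_mul_of_nonneg_left (mul_le_mul_of_nonneg_left h1 hGpos.le) hx1.le
    nlinarith [h4, h5, hGpos]
  have hS : (x+1) * h^2 + g * Real.log h * h < x * g := by
    have e1 : (x+1) * h^2 ≤ (x+1) * u^2 := by
      apply mul_le_mul_of_nonneg_left _ hx1.le
      nlinarith [hhpos, hhu]
    have e2 : g * Real.log h * h ≤ ((x+1) * G) * Real.log u * u := by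
      have a1 : g * Real.log h ≤ ((x+1)*G) * Real.log u :=
        mul_le_mul hg_ub hlogh_le hℓpos.le (by positivity)
      have hlogu_pos : 0 < Real.log u := lt_of_lt_of_le hℓpos hlogh_le
      exact mul_le_mul a1 hhu hhpos.le (mul_nonneg (by positivity) hlogu_pos.le)
    have e3 : x * (x * G) ≤ x * g := mul_le_mul_of_nonneg_left hg_lb hx0.le
    linarith [key2, e1, e2, e3]
  have hmain : 0 < t*h - h*h + g*((t-1)*Real.log h * h + t) :=
    Aux.final_step hx0 hhpos hgpos hℓpos ht hS
  have heq : t - h + g*((t-1)*Real.log h + t/h)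
      = (t*h - h*h + g*((t-1)*Real.log h*h + t))/h := by
    field_simp
  rw [heq]
  exact div_pos hmain hhpos
end
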